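/- arXiv:1902.03873 — 9 statements merged into one kernel-verified Lean document; each statement's English description precedes it below -/
import Mathlib

section
/- Let A = C⟨X₁,…,Xₙ,Y₁,…,Yₘ⟩/Z be the algebra where Z is the ideal generated by all commutators [Xᵢ,Yⱼ]. Equip A⊗A with multiplication (Z₁⊗Z₂)·(W₁⊗W₂)=Z₁W₁⊗Z₂W₂, and let Θ_{(1,2)}(Z₁⊗Z₂)=Z₂⊗Z₁. Then for every P ∈ A: ∑_{i=1}^{n} [∂_{ℓ,Xᵢ}(P)(Xᵢ⊗1) − (1⊗Xᵢ)∂_{ℓ,Xᵢ}(P)] − Θ_{(1,2)}(∑_{j=1}^{m} [∂_{r,Yⱼ}(P)(Yⱼ⊗1) − (1⊗Yⱼ)∂_{r,Yⱼ}(P)]) = P⊗1 − 1⊗P. -/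
/-!
Both sides are linear in `P`, so it suffices to take a monomial `P = x y` with
`x = X_{i₁}⋯X_{i_p}` and `y = Y_{j₁}⋯Y_{j_q}`. Since the `Xᵢ` commute with `y`, the `k`-th term
of the left sum is `g (k+1) - g k` for `g k = y x_{<k} ⊗ x_{≥k}`, so the sum telescopes to
`P ⊗ 1 - y ⊗ x`. Symmetrically the right sum is `P ⊗ 1 - x ⊗ y`, whose flip `1 ⊗ P - y ⊗ x`
cancels the cross term.
-/

open Finset TensorProduct

set_option synthInstance.maxHeartbeats 400000
set_option maxHeartbeats 800000

/-- The algebra `ℂ⟨X₁,…,Xₙ,Y₁,…,Yₘ⟩ / ([Xᵢ,Yⱼ] = 0)`, modelled as the tensor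
product of the free algebra on the left variables with the free algebra on the
right variables.  The `Xᵢ` are `ι i ⊗ 1` and the `Yⱼ` are `1 ⊗ ι j`; the
multiplication on `A ⊗ A` is `(Z₁⊗Z₂)·(W₁⊗W₂) = Z₁W₁ ⊗ Z₂W₂`. -/
abbrev BiPartiteAlg (n m : ℕ) : Type :=
  FreeAlgebra ℂ (Fin n) ⊗[ℂ] FreeAlgebra ℂ (Fin m)

/-- The product of the word `w` of generators in the free algebra. -/
noncomputable def wordProd {k : ℕ} (w : List (Fin k)) : FreeAlgebra ℂ (Fin k) :=
  (w.map (FreeAlgebra.ι ℂ)).prod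

/-- The left variable `Xᵢ`. -/
noncomputable def Xel {n m : ℕ} (i : Fin n) : BiPartiteAlg n m :=
  FreeAlgebra.ι ℂ i ⊗ₜ[ℂ] (1 : FreeAlgebra ℂ (Fin m))

/-- The right variable `Yⱼ`. -/
noncomputable def Yel {n m : ℕ} (j : Fin m) : BiPartiteAlg n m :=
  (1 : FreeAlgebra ℂ (Fin n)) ⊗ₜ[ℂ] FreeAlgebra.ι ℂ j

theorem range_wordProd (k : ℕ) :
    Set.range (wordProd (k := k)) =
      ↑(Submonoid.closure (Set.range (FreeAlgebra.ι ℂ (X := Fin k)))) := by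
  rw [← FreeMonoid.mrange_lift, MonoidHom.coe_mrange]
  ext x
  simp only [Set.mem_range, FreeMonoid.lift_apply, wordProd]
  rfl

theorem span_range_wordProd (k : ℕ) :
    Submodule.span ℂ (Set.range (wordProd (k := k))) = ⊤ := by
  rw [range_wordProd, ← Algebra.adjoin_eq_span, FreeAlgebra.adjoin_range_ι,
    Algebra.top_toSubmodule]

theorem BiPartiteAlg.linearMap_ext {n m : ℕ} {M : Type*} [AddCommMonoid M] [Module ℂ M]
    {f g : BiPartiteAlg n m →ₗ[ℂ] M}
    (h : ∀ wx wy, f (wordProd wx ⊗ₜ wordProd wy) = g (wordProd wx ⊗ₜ wordProd wy)) : f = g :=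
  TensorProduct.ext <| LinearMap.ext_on_range (span_range_wordProd n) fun wx =>
    LinearMap.ext_on_range (span_range_wordProd m) fun wy => h wx wy

section InnerCommutator

variable (R : Type*) {A : Type*} [CommSemiring R] [Ring A] [Algebra R A]

/-- `t ↦ t • a - a • t` for the inner `A`-bimodule structure `(x ⊗ y) • a = x a ⊗ y`,
`a • (x ⊗ y) = x ⊗ a y` on `A ⊗ A`. -/
def innerCommutator (a : A) : A ⊗[R] A →ₗ[R] A ⊗[R] A :=
  LinearMap.mulRight R (a ⊗ₜ 1) - LinearMap.mulLeft R (1 ⊗ₜ a)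

theorem innerCommutator_apply (a : A) (t : A ⊗[R] A) :
    innerCommutator R a t = t * (a ⊗ₜ 1) - (1 ⊗ₜ a) * t :=
  rfl

theorem innerCommutator_tmul (a x y : A) :
    innerCommutator R a (x ⊗ₜ y) = (x * a) ⊗ₜ[R] y - x ⊗ₜ[R] (a * y) := by
  simp [innerCommutator_apply, Algebra.TensorProduct.tmul_mul_tmul]

/-- The `k`-th term is `g (k+1) - g k` for `g k = c w_{<k} ⊗ w_{≥k}`. -/
theorem sum_innerCommutator_take_drop {ι : Type*} (f : ι → A) (c : A) (w : List ι) :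
    ∑ k : Fin w.length, innerCommutator R (f w[k])
        ((c * ((w.take k).map f).prod) ⊗ₜ[R] ((w.drop (k + 1)).map f).prod) =
      (c * (w.map f).prod) ⊗ₜ[R] 1 - c ⊗ₜ[R] (w.map f).prod := by
  induction w generalizing c with
  | nil => simp
  | cons a w ih =>
    erw [Fin.sum_univ_succ]
    simp only [Fin.getElem_fin, Fin.val_zero, Fin.val_succ, List.getElem_cons_zero,
      List.getElem_cons_succ, List.take_zero, List.drop_zero, List.take_succ_cons,
      List.drop_succ_cons, List.map_cons, List.map_nil, List.prod_cons, List.prod_nil, mul_one,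
      ← mul_assoc]
    simp only [Fin.getElem_fin] at ih
    rw [ih, innerCommutator_tmul]
    simp only [mul_assoc]
    abel

end InnerCommutator

theorem sum_apply_sum_range_ite_getElem? {ι M N F : Type*} [Fintype ι] [DecidableEq ι]
    [AddCommMonoid M] [AddCommMonoid N] [FunLike F M N] [AddMonoidHomClass F M N]
    (φ : ι → F) (w : List ι) (t : ℕ → M) :
    ∑ i, φ i (∑ k ∈ range w.length, if w[k]? = some i then t k else 0) =
      ∑ k : Fin w.length, φ w[k] (t k) := by
  simp only [map_sum, apply_ite, map_zero]
  rw [Finset.sum_comm, ← Fin.sum_univ_eq_sum_range]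
  simp

theorem wordProd_tmul_one {n m : ℕ} (w : List (Fin n)) :
    (wordProd w ⊗ₜ[ℂ] (1 : FreeAlgebra ℂ (Fin m)) : BiPartiteAlg n m) = (w.map Xel).prod := by
  rw [← Algebra.TensorProduct.includeLeft_apply (S := ℂ), wordProd, map_list_prod, List.map_map]
  rfl

theorem one_tmul_wordProd {n m : ℕ} (w : List (Fin m)) :
    ((1 : FreeAlgebra ℂ (Fin n)) ⊗ₜ[ℂ] wordProd w : BiPartiteAlg n m) = (w.map Yel).prod := by
  rw [← Algebra.TensorProduct.includeRight_apply, wordProd, map_list_prod, List.map_map]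
  rfl

section DifferenceQuotients

variable {n m : ℕ}

def IsLeftBiFreeDiffQuot
    (Dl : Fin n → (BiPartiteAlg n m →ₗ[ℂ] BiPartiteAlg n m ⊗[ℂ] BiPartiteAlg n m)) : Prop :=
  ∀ (i : Fin n) (wx : List (Fin n)) (wy : List (Fin m)),
    Dl i (wordProd wx ⊗ₜ[ℂ] wordProd wy) =
      ∑ k ∈ range wx.length,
        if wx[k]? = some i then
          ((wordProd (wx.take k) ⊗ₜ[ℂ] wordProd wy) ⊗ₜ[ℂ]
            (wordProd (wx.drop (k+1)) ⊗ₜ[ℂ] (1 : FreeAlgebra ℂ (Fin m))) :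
              BiPartiteAlg n m ⊗[ℂ] BiPartiteAlg n m)
        else 0

def IsRightBiFreeDiffQuot
    (Dr : Fin m → (BiPartiteAlg n m →ₗ[ℂ] BiPartiteAlg n m ⊗[ℂ] BiPartiteAlg n m)) : Prop :=
  ∀ (j : Fin m) (wx : List (Fin n)) (wy : List (Fin m)),
    Dr j (wordProd wx ⊗ₜ[ℂ] wordProd wy) =
      ∑ k ∈ range wy.length,
        if wy[k]? = some j then
          ((wordProd wx ⊗ₜ[ℂ] wordProd (wy.take k)) ⊗ₜ[ℂ]
            ((1 : FreeAlgebra ℂ (Fin n)) ⊗ₜ[ℂ] wordProd (wy.drop (k+1))) :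
              BiPartiteAlg n m ⊗[ℂ] BiPartiteAlg n m)
        else 0

theorem IsLeftBiFreeDiffQuot.sum_innerCommutator_Xel {Dl : Fin n → (BiPartiteAlg n m →ₗ[ℂ]
      BiPartiteAlg n m ⊗[ℂ] BiPartiteAlg n m)} (hDl : IsLeftBiFreeDiffQuot Dl)
    (wx : List (Fin n)) (wy : List (Fin m)) :
    ∑ i, innerCommutator ℂ (Xel i) (Dl i (wordProd wx ⊗ₜ[ℂ] wordProd wy)) =
      (wordProd wx ⊗ₜ[ℂ] wordProd wy) ⊗ₜ[ℂ] (1 : BiPartiteAlg n m) -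
        ((1 : FreeAlgebra ℂ (Fin n)) ⊗ₜ[ℂ] wordProd wy : BiPartiteAlg n m) ⊗ₜ[ℂ]
          (wordProd wx ⊗ₜ[ℂ] (1 : FreeAlgebra ℂ (Fin m)) : BiPartiteAlg n m) := by
  have telescope := sum_innerCommutator_take_drop ℂ Xel
    ((1 : FreeAlgebra ℂ (Fin n)) ⊗ₜ[ℂ] wordProd wy : BiPartiteAlg n m) wx
  simp only [← wordProd_tmul_one, Algebra.TensorProduct.tmul_mul_tmul, one_mul, mul_one]
    at telescope
  unfold IsLeftBiFreeDiffQuot at hDl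
  simp only [hDl]
  rw [sum_apply_sum_range_ite_getElem?, ← telescope]

theorem IsRightBiFreeDiffQuot.sum_innerCommutator_Yel {Dr : Fin m → (BiPartiteAlg n m →ₗ[ℂ]
      BiPartiteAlg n m ⊗[ℂ] BiPartiteAlg n m)} (hDr : IsRightBiFreeDiffQuot Dr)
    (wx : List (Fin n)) (wy : List (Fin m)) :
    ∑ j, innerCommutator ℂ (Yel j) (Dr j (wordProd wx ⊗ₜ[ℂ] wordProd wy)) =
      (wordProd wx ⊗ₜ[ℂ] wordProd wy) ⊗ₜ[ℂ] (1 : BiPartiteAlg n m) -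
        (wordProd wx ⊗ₜ[ℂ] (1 : FreeAlgebra ℂ (Fin m)) : BiPartiteAlg n m) ⊗ₜ[ℂ]
          ((1 : FreeAlgebra ℂ (Fin n)) ⊗ₜ[ℂ] wordProd wy : BiPartiteAlg n m) := by
  have telescope := sum_innerCommutator_take_drop ℂ Yel
    (wordProd wx ⊗ₜ[ℂ] (1 : FreeAlgebra ℂ (Fin m)) : BiPartiteAlg n m) wy
  simp only [← one_tmul_wordProd, Algebra.TensorProduct.tmul_mul_tmul, one_mul, mul_one]
    at telescope
  unfold IsRightBiFreeDiffQuot at hDr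
  simp only [hDr]
  rw [sum_apply_sum_range_ite_getElem?, ← telescope]

end DifferenceQuotients

/-- Proposition `zero-diff-quot-equals-scalar`, main identity: for the left and
right bi-free difference quotients `∂_{ℓ,Xᵢ}`, `∂_{r,Yⱼ}` (characterized by their
values on monomials `X_{i₁}⋯X_{i_p} Y_{j₁}⋯Y_{j_q}`), and for every `P`,
`∑ᵢ [∂_{ℓ,Xᵢ}(P)(Xᵢ⊗1) − (1⊗Xᵢ)∂_{ℓ,Xᵢ}(P)]
  − Θ_{(1,2)}(∑ⱼ [∂_{r,Yⱼ}(P)(Yⱼ⊗1) − (1⊗Yⱼ)∂_{r,Yⱼ}(P)]) = P⊗1 − 1⊗P`. -/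
theorem stmt1 (n m : ℕ)
    (Dl : Fin n → (BiPartiteAlg n m →ₗ[ℂ] BiPartiteAlg n m ⊗[ℂ] BiPartiteAlg n m))
    (Dr : Fin m → (BiPartiteAlg n m →ₗ[ℂ] BiPartiteAlg n m ⊗[ℂ] BiPartiteAlg n m))
    (hDl : ∀ (i : Fin n) (wx : List (Fin n)) (wy : List (Fin m)),
      Dl i (wordProd wx ⊗ₜ[ℂ] wordProd wy) =
        ∑ k ∈ range wx.length,
          if wx[k]? = some i then
            ((wordProd (wx.take k) ⊗ₜ[ℂ] wordProd wy) ⊗ₜ[ℂ]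
              (wordProd (wx.drop (k+1)) ⊗ₜ[ℂ] (1 : FreeAlgebra ℂ (Fin m))) :
                BiPartiteAlg n m ⊗[ℂ] BiPartiteAlg n m)
          else 0)
    (hDr : ∀ (j : Fin m) (wx : List (Fin n)) (wy : List (Fin m)),
      Dr j (wordProd wx ⊗ₜ[ℂ] wordProd wy) =
        ∑ k ∈ range wy.length,
          if wy[k]? = some j then
            ((wordProd wx ⊗ₜ[ℂ] wordProd (wy.take k)) ⊗ₜ[ℂ]
              ((1 : FreeAlgebra ℂ (Fin n)) ⊗ₜ[ℂ] wordProd (wy.drop (k+1))) :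
                BiPartiteAlg n m ⊗[ℂ] BiPartiteAlg n m)
          else 0)
    (P : BiPartiteAlg n m) :
    (∑ i, (Dl i P * (Xel i ⊗ₜ[ℂ] (1 : BiPartiteAlg n m))
        - ((1 : BiPartiteAlg n m) ⊗ₜ[ℂ] Xel i) * Dl i P))
    - (TensorProduct.comm ℂ (BiPartiteAlg n m) (BiPartiteAlg n m))
        (∑ j, (Dr j P * (Yel j ⊗ₜ[ℂ] (1 : BiPartiteAlg n m))
          - ((1 : BiPartiteAlg n m) ⊗ₜ[ℂ] Yel j) * Dr j P))
    = P ⊗ₜ[ℂ] (1 : BiPartiteAlg n m) - (1 : BiPartiteAlg n m) ⊗ₜ[ℂ] P := by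
  have key : (∑ i, innerCommutator ℂ (Xel i) ∘ₗ Dl i) +
      TensorProduct.mk ℂ (BiPartiteAlg n m) (BiPartiteAlg n m) 1 =
      (TensorProduct.comm ℂ (BiPartiteAlg n m) (BiPartiteAlg n m)).toLinearMap ∘ₗ
        (∑ j, innerCommutator ℂ (Yel j) ∘ₗ Dr j) +
      (TensorProduct.mk ℂ (BiPartiteAlg n m) (BiPartiteAlg n m)).flip 1 := by
    refine BiPartiteAlg.linearMap_ext fun wx wy => ?_
    simp only [LinearMap.add_apply, LinearMap.sum_apply, LinearMap.comp_apply]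
    rw [IsLeftBiFreeDiffQuot.sum_innerCommutator_Xel hDl,
      IsRightBiFreeDiffQuot.sum_innerCommutator_Yel hDr]
    simp only [mk_apply, LinearMap.flip_apply, LinearEquiv.coe_coe, map_sub, comm_tmul]
    abel
  have hP := LinearMap.congr_fun key P
  simp only [LinearMap.add_apply, LinearMap.sum_apply, LinearMap.comp_apply,
    innerCommutator_apply, mk_apply, LinearMap.flip_apply, LinearEquiv.coe_coe] at hP
  rw [sub_eq_sub_iff_add_eq_add (G := BiPartiteAlg n m ⊗[ℂ] BiPartiteAlg n m), hP, add_comm]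
end

section
/- In the free algebra A = C⟨X,Y⟩ (with no relations between X and Y), the element P = XY − YX satisfies ∂_{ℓ,X}(P) = 0 and ∂_{r,Y}(P) = 0, but P is not a scalar. Hence in the non-bi-partite setting there exist non-scalar elements with vanishing bi-free difference quotients. -/
open Finset TensorProduct

/-- In `A = ℂ⟨X,Y⟩` (free, no relations), the product of a word over the
alphabet `Bool`, where `true` is the left variable `X` and `false` is the right
variable `Y`. -/
noncomputable def bwordProd (w : List Bool) : FreeAlgebra ℂ Bool :=
  (w.map (FreeAlgebra.ι ℂ)).prod

/-- Comparing coefficients of the word `ab` in the monoid-algebra model of the free algebra. -/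
theorem FreeAlgebra.ι_mul_ι_sub_ι_mul_ι_ne_algebraMap {R X : Type*} [CommRing R] [Nontrivial R]
    {a b : X} (hab : a ≠ b) (c : R) :
    ι R a * ι R b - ι R b * ι R a ≠ algebraMap R (FreeAlgebra R X) c := by
  intro h
  have hw := congrArg (fun p => (equivMonoidAlgebraFreeMonoid p).coeff (.of a * .of b)) h
  have hba : FreeMonoid.of b * FreeMonoid.of a ≠ FreeMonoid.of a * .of b := by
    intro hmul
    exact hab (by simpa using congrArg FreeMonoid.toList hmul : b = a ∧ a = b).2
  simp [equivMonoidAlgebraFreeMonoid, MonoidAlgebra.coeff_single, hba] at hw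

lemma bwordProd_pair (a b : Bool) :
    bwordProd [a, b] = FreeAlgebra.ι ℂ a * FreeAlgebra.ι ℂ b := by
  simp [bwordProd]

/-- In the non-bi-partite setting there exist non-scalar elements with vanishing
bi-free difference quotients: in `A = ℂ⟨X,Y⟩` with no relations between `X` and
`Y`, the element `P = XY − YX` satisfies `∂_{ℓ,X}(P) = 0` and `∂_{r,Y}(P) = 0`
but `P` is not a scalar.  Here `∂_{ℓ,X} = (C⊗1)∘(1⊗T_ℓ)∘∂_X` and
`∂_{r,Y} = (C⊗1)∘(1⊗T_r)∘∂_Y` are the linear maps characterized on words by: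
differentiating at each occurrence of `X` (resp. `Y`), routing the right (resp.
left) letters of the tail to the first tensor leg and the left (resp. right)
letters of the tail to the second leg. -/
theorem stmt3
    (Dl Dr : FreeAlgebra ℂ Bool →ₗ[ℂ] FreeAlgebra ℂ Bool ⊗[ℂ] FreeAlgebra ℂ Bool)
    (hDl : ∀ w : List Bool, Dl (bwordProd w) =
      ∑ k ∈ range w.length,
        if w[k]? = some true then
          (bwordProd (w.take k) * bwordProd ((w.drop (k+1)).filter (fun b => !b)))
            ⊗ₜ[ℂ] bwordProd ((w.drop (k+1)).filter (fun b => b))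
        else 0)
    (hDr : ∀ w : List Bool, Dr (bwordProd w) =
      ∑ k ∈ range w.length,
        if w[k]? = some false then
          (bwordProd (w.take k) * bwordProd ((w.drop (k+1)).filter (fun b => b)))
            ⊗ₜ[ℂ] bwordProd ((w.drop (k+1)).filter (fun b => !b))
        else 0) :
    Dl (FreeAlgebra.ι ℂ true * FreeAlgebra.ι ℂ false
        - FreeAlgebra.ι ℂ false * FreeAlgebra.ι ℂ true) = 0 ∧
    Dr (FreeAlgebra.ι ℂ true * FreeAlgebra.ι ℂ false
        - FreeAlgebra.ι ℂ false * FreeAlgebra.ι ℂ true) = 0 ∧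
    ¬ ∃ c : ℂ, FreeAlgebra.ι ℂ true * FreeAlgebra.ι ℂ false
        - FreeAlgebra.ι ℂ false * FreeAlgebra.ι ℂ true
          = algebraMap ℂ (FreeAlgebra ℂ Bool) c := by
  refine ⟨?_, ?_, fun ⟨c, hc⟩ => FreeAlgebra.ι_mul_ι_sub_ι_mul_ι_ne_algebraMap (by decide) c hc⟩
  -- both words `XY` and `YX` are sent to `Y ⊗ 1` by `∂_{ℓ,X}` and to `X ⊗ 1` by `∂_{r,Y}`
  · rw [map_sub, ← bwordProd_pair, ← bwordProd_pair, hDl, hDl, sub_eq_zero]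
    simp [sum_range_succ, bwordProd]
  · rw [map_sub, ← bwordProd_pair, ← bwordProd_pair, hDr, hDr, sub_eq_zero]
    simp [sum_range_succ, bwordProd]
end

section
/- Let (S,T) be a self-adjoint bi-free central limit pair with φ(S)=φ(T)=0, φ(S²)=φ(T²)=1, φ(ST)=φ(TS)=c ∈ (−1,1). Then for all n,m ≥ 0: φ(SⁿTᵐS) = ∑_{i=0}^{n−1} φ(SⁱTᵐ)φ(S^{n−i−1}) + c∑_{j=0}^{m−1} φ(SⁿTʲ)φ(T^{m−j−1}), and φ(SⁿTᵐT) = c∑_{i=0}^{n−1} φ(SⁱTᵐ)φ(S^{n−i−1}) + ∑_{j=0}^{m−1} φ(SⁿTʲ)φ(T^{m−j−1}). Consequently φ(SⁿTᵐ·(1−c²)^{−1}(S−cT)) = ∑_{i=0}^{n−1} φ(SⁱTᵐ)φ(S^{n−i−1}), i.e. ξ = (1−c²)^{−1}(S−cT) is the left bi-free conjugate variable of S. -/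
/-!
The moments are those of a non-crossing pairing functional: `M (a :: w)` pairs the first letter
with some `w[j]` and splits `w` into the inside and the outside of that pair. Pairing the *last*
letter instead gives the mirror recursion `M (w ++ [a]) = partnerSum c M a w`, since expanding
both sides once more yields the same double sum over the partners `j < t` of the first and the
last letter. In the bi-free order `SⁿTᵐS` adds `S` in front of `SⁿTᵐ`, while `SⁿTᵐT` adds `T` at
the end, so the two recursions evaluated on `SⁿTᵐ` give the two moment formulas, and
`(1 - c²)⁻¹ (S - cT)` cancels the `T`-sum.
-/

open Finset

section PairingRecursion

variable {α R : Type*} [DecidableEq α] [CommRing R] (c : R) (M : List α → R)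

def partnerSum (a : α) (w : List α) : R :=
  ∑ j ∈ range w.length, (if w[j]? = some a then 1 else c) * M (w.take j) * M (w.drop (j + 1))

theorem partnerSum_append (a : α) (u v : List α) :
    partnerSum c M a (u ++ v) =
      (∑ j ∈ range u.length,
        (if u[j]? = some a then 1 else c) * M (u.take j) * M (u.drop (j + 1) ++ v)) +
      ∑ k ∈ range v.length,
        (if v[k]? = some a then 1 else c) * M (u ++ v.take k) * M (v.drop (k + 1)) := by
  rw [partnerSum, List.length_append, sum_range_add]
  congr 1
  · refine sum_congr rfl fun j hj => ?_
    have hj : j < u.length := mem_range.mp hj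
    rw [List.getElem?_append_left hj, List.take_append_of_le_length hj.le,
      List.drop_append_of_le_length hj]
  · refine sum_congr rfl fun k _ => ?_
    rw [List.getElem?_append_right (by omega), List.take_append, List.drop_append]
    simp [List.take_of_length_le, List.drop_eq_nil_of_le, Nat.add_assoc]

theorem moment_append_singleton (h0 : M [] = 1)
    (hrec : ∀ a w, M (a :: w) = partnerSum c M a w) (w : List α) (a : α) :
    M (w ++ [a]) = partnerSum c M a w := by
  match w with
  | [] => simp [hrec, partnerSum]
  | b :: v =>
    have hL : M (b :: v ++ [a]) = (∑ j ∈ range v.length, ∑ t ∈ Ico (j + 1) v.length,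
        (if v[j]? = some b then 1 else c) * M (v.take j) *
          ((if v[t]? = some a then 1 else c) * M ((v.drop (j + 1)).take (t - (j + 1))) *
            M (v.drop (t + 1))))
        + (if a = b then 1 else c) * M v := by
      rw [List.cons_append, hrec, partnerSum_append]
      congr 1
      · refine sum_congr rfl fun j hj => ?_
        rw [moment_append_singleton h0 hrec, partnerSum, mul_sum, sum_Ico_eq_sum_range,
          List.length_drop]
        refine sum_congr rfl fun t ht => ?_
        rw [List.getElem?_drop, List.drop_drop, Nat.add_sub_cancel_left]
        rfl
      · simp [h0]
    have hR : partnerSum c M a (b :: v) = (∑ t ∈ range v.length, ∑ j ∈ range t,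
        (if v[j]? = some b then 1 else c) * M (v.take j) *
          ((if v[t]? = some a then 1 else c) * M ((v.drop (j + 1)).take (t - (j + 1))) *
            M (v.drop (t + 1))))
        + (if a = b then 1 else c) * M v := by
      rw [← List.singleton_append, partnerSum_append, add_comm]
      congr 1
      · refine sum_congr rfl fun t ht => ?_
        rw [List.singleton_append, hrec, partnerSum, mul_sum, sum_mul, List.length_take,
          min_eq_left (mem_range.mp ht).le]
        refine sum_congr rfl fun j hj => ?_
        have hjt : j < t := mem_range.mp hj
        rw [List.getElem?_take_of_lt hjt, List.take_take, min_eq_left hjt.le, List.drop_take]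
        ring
      · simp [h0, eq_comm]
    rw [hL, hR, range_eq_Ico, sum_Ico_Ico_comm']
    simp only [range_eq_Ico]
termination_by w.length

theorem partnerSum_replicate_append_replicate (x y a : α) (n m : ℕ) :
    partnerSum c M a (List.replicate n x ++ List.replicate m y) =
      (if x = a then 1 else c) * ∑ i ∈ range n,
        M (List.replicate i x ++ List.replicate m y) * M (List.replicate (n - i - 1) x) +
      (if y = a then 1 else c) * ∑ j ∈ range m,
        M (List.replicate n x ++ List.replicate j y) * M (List.replicate (m - j - 1) y) := by
  rw [partnerSum_append, List.length_replicate, List.length_replicate, mul_sum, mul_sum,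
    ← sum_range_reflect _ n]
  congr 1
  · refine sum_congr rfl fun i hi => ?_
    have hi : i < n := mem_range.mp hi
    rw [List.getElem?_replicate_of_lt (by omega), List.take_replicate, List.drop_replicate,
      min_eq_left (by omega), show n - (n - 1 - i + 1) = i by omega,
      show n - 1 - i = n - i - 1 by omega]
    simp only [Option.some_inj]
    ring
  · refine sum_congr rfl fun j hj => ?_
    have hj : j < m := mem_range.mp hj
    rw [List.getElem?_replicate_of_lt hj, List.take_replicate, List.drop_replicate,
      min_eq_left hj.le, Nat.sub_sub]
    simp only [Option.some_inj]
    ring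

end PairingRecursion

/-- Moment formulas for a self-adjoint bi-free central limit pair `(S,T)` with
`φ(S²)=φ(T²)=1` and `φ(ST)=φ(TS)=c ∈ (−1,1)`.  The joint moments are encoded by
the function `M` on words over `Bool` (`true` = `S`, `false` = `T`), arranged in
the bi-non-crossing (`χ`-)order (lefts in increasing position order, then rights
in decreasing position order), so that `M` satisfies the Gaussian non-crossing
pairing recursion: `M([]) = 1` and
`M(a::w) = ∑ⱼ cov(a,wⱼ)·M(w_{<j})·M(w_{>j})` with `cov(a,b) = 1` if `a = b`
and `c` otherwise.  Then, with `μ n m = φ(SⁿTᵐ)`: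
`φ(SⁿTᵐS) = ∑_{i<n} φ(SⁱTᵐ)φ(S^{n−i−1}) + c ∑_{j<m} φ(SⁿTʲ)φ(T^{m−j−1})`,
`φ(SⁿTᵐT) = c ∑_{i<n} φ(SⁱTᵐ)φ(S^{n−i−1}) + ∑_{j<m} φ(SⁿTʲ)φ(T^{m−j−1})`,
and consequently
`φ(SⁿTᵐ·(1−c²)⁻¹(S−cT)) = ∑_{i<n} φ(SⁱTᵐ)φ(S^{n−i−1})`, i.e.
`ξ = (1−c²)⁻¹(S−cT)` is the left bi-free conjugate variable of `S`. -/
theorem stmt5 (c : ℝ) (hc : -1 < c ∧ c < 1) (M : List Bool → ℝ)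
    (hM0 : M [] = 1)
    (hMrec : ∀ (a : Bool) (w : List Bool),
      M (a :: w) = ∑ j ∈ range w.length,
        (if w[j]? = some a then (1 : ℝ) else c) * M (w.take j) * M (w.drop (j+1))) :
    ∀ n m : ℕ,
      (M (List.replicate n true ++ true :: List.replicate m false) =
        ∑ i ∈ range n,
          M (List.replicate i true ++ List.replicate m false) * M (List.replicate (n-i-1) true)
        + c * ∑ j ∈ range m,
          M (List.replicate n true ++ List.replicate j false) * M (List.replicate (m-j-1) false)) ∧
      (M (List.replicate n true ++ false :: List.replicate m false) =
        c * ∑ i ∈ range n,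
          M (List.replicate i true ++ List.replicate m false) * M (List.replicate (n-i-1) true)
        + ∑ j ∈ range m,
          M (List.replicate n true ++ List.replicate j false) * M (List.replicate (m-j-1) false)) ∧
      ((1 - c^2)⁻¹ * (M (List.replicate n true ++ true :: List.replicate m false)
          - c * M (List.replicate n true ++ false :: List.replicate m false)) =
        ∑ i ∈ range n,
          M (List.replicate i true ++ List.replicate m false) * M (List.replicate (n-i-1) true)) := by
  intro n m
  have hrec : ∀ a w, M (a :: w) = partnerSum c M a w := hMrec
  have hS : M (List.replicate n true ++ true :: List.replicate m false) =
      M (true :: (List.replicate n true ++ List.replicate m false)) := by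
    rw [List.append_cons, ← List.replicate_succ', List.replicate_succ, List.cons_append]
  have hT : M (List.replicate n true ++ false :: List.replicate m false) =
      M (List.replicate n true ++ List.replicate m false ++ [false]) := by
    simp [← List.replicate_succ, List.replicate_succ']
  rw [hS, hT, hrec, moment_append_singleton c M hM0 hrec,
    partnerSum_replicate_append_replicate, partnerSum_replicate_append_replicate]
  simp only [Bool.true_eq_false, Bool.false_eq_true, ↓reduceIte, one_mul, true_and]
  have hc2 : (1 : ℝ) - c ^ 2 ≠ 0 := by nlinarith
  field_simp
  ring
end

section
/- (Bi-free Stam inequality, Hilbert-space form.) Let H be a real or complex Hilbert space and h₁, h₂, h₃, f₁, f₂ ∈ H satisfy h₁ = h₃ + f₁, h₂ = h₃ + f₂, h₃ ⊥ f₁, h₃ ⊥ f₂, and h₁ ⊥ h₂. Then ‖h₃‖² (‖h₁‖² + ‖h₂‖²) ≤ ‖h₁‖²‖h₂‖², and hence if ‖h₁‖, ‖h₂‖, ‖h₃‖ are all nonzero, (‖h₃‖²)^{−1} ≥ (‖h₁‖²)^{−1} + (‖h₂‖²)^{−1}. -/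
/-!
Writing `h₁ = h₃ + f₁` and `h₂ = h₃ + f₂` with `h₃ ⊥ f₁, f₂`, orthogonality of `h₁` and `h₂`
reads `⟪f₁, f₂⟫ = -‖h₃‖²`, so Cauchy–Schwarz gives `‖h₃‖² ≤ ‖f₁‖‖f₂‖`. By Pythagoras
`‖hᵢ‖² = ‖h₃‖² + ‖fᵢ‖²`, and then `‖h₁‖²‖h₂‖² - ‖h₃‖²(‖h₁‖² + ‖h₂‖²) = ‖f₁‖²‖f₂‖² - ‖h₃‖⁴ ≥ 0`.
-/

section InnerProductSpace

variable {𝕜 H : Type*} [RCLike 𝕜] [NormedAddCommGroup H] [InnerProductSpace 𝕜 H]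

theorem norm_add_sq_of_inner_eq_zero {x y : H} (h : (inner 𝕜 x y : 𝕜) = 0) :
    ‖x + y‖ ^ 2 = ‖x‖ ^ 2 + ‖y‖ ^ 2 := by
  simpa only [sq] using norm_add_sq_eq_norm_sq_add_norm_sq_of_inner_eq_zero x y h

theorem inner_eq_neg_norm_sq_of_inner_add_add_eq_zero {x y z : H}
    (hy : (inner 𝕜 x y : 𝕜) = 0) (hz : (inner 𝕜 x z : 𝕜) = 0)
    (h : (inner 𝕜 (x + y) (x + z) : 𝕜) = 0) :
    (inner 𝕜 y z : 𝕜) = -((‖x‖ : 𝕜) ^ 2) := by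
  have hy' : (inner 𝕜 y x : 𝕜) = 0 := inner_eq_zero_symm.mp hy
  rw [inner_add_left, inner_add_right, inner_add_right, hy', hz,
    inner_self_eq_norm_sq_to_K] at h
  linear_combination h

theorem norm_sq_le_norm_mul_norm_of_inner_add_add_eq_zero {x y z : H}
    (hy : (inner 𝕜 x y : 𝕜) = 0) (hz : (inner 𝕜 x z : 𝕜) = 0)
    (h : (inner 𝕜 (x + y) (x + z) : 𝕜) = 0) :
    ‖x‖ ^ 2 ≤ ‖y‖ * ‖z‖ := by
  have cauchy_schwarz := norm_inner_le_norm (𝕜 := 𝕜) y z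
  rwa [inner_eq_neg_norm_sq_of_inner_add_add_eq_zero hy hz h, norm_neg, norm_pow,
    RCLike.norm_ofReal, abs_norm] at cauchy_schwarz

end InnerProductSpace

theorem mul_add_add_le_add_mul_add {t x y : ℝ} (ht : 0 ≤ t) (h : t ≤ x * y) :
    t * ((t + x ^ 2) + (t + y ^ 2)) ≤ (t + x ^ 2) * (t + y ^ 2) := by
  nlinarith [mul_le_mul h h ht (ht.trans h)]

theorem inv_add_inv_le_inv_of_mul_add_le_mul {α : Type*} [Field α] [LinearOrder α]
    [IsStrictOrderedRing α] {a b c : α} (ha : 0 < a) (hb : 0 < b) (hc : 0 < c)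
    (h : c * (a + b) ≤ a * b) : a⁻¹ + b⁻¹ ≤ c⁻¹ := by
  rw [inv_add_inv ha.ne' hb.ne', div_le_iff₀ (mul_pos ha hb), inv_mul_eq_div,
    le_div_iff₀ hc]
  linarith

/-- Bi-free Stam inequality, Hilbert-space form.  If `h₁ = h₃ + f₁`,
`h₂ = h₃ + f₂` with `h₃ ⊥ f₁`, `h₃ ⊥ f₂`, and `h₁ ⊥ h₂`, then
`‖h₃‖²(‖h₁‖² + ‖h₂‖²) ≤ ‖h₁‖²‖h₂‖²`, and hence, when all three norms are
nonzero, `(‖h₃‖²)⁻¹ ≥ (‖h₁‖²)⁻¹ + (‖h₂‖²)⁻¹`. -/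
theorem stmt8 {𝕜 H : Type*} [RCLike 𝕜] [NormedAddCommGroup H] [InnerProductSpace 𝕜 H]
    (h₁ h₂ h₃ f₁ f₂ : H)
    (e1 : h₁ = h₃ + f₁) (e2 : h₂ = h₃ + f₂)
    (o1 : (inner 𝕜 h₃ f₁ : 𝕜) = 0) (o2 : (inner 𝕜 h₃ f₂ : 𝕜) = 0)
    (o3 : (inner 𝕜 h₁ h₂ : 𝕜) = 0) :
    ‖h₃‖^2 * (‖h₁‖^2 + ‖h₂‖^2) ≤ ‖h₁‖^2 * ‖h₂‖^2 ∧
    (‖h₁‖ ≠ 0 → ‖h₂‖ ≠ 0 → ‖h₃‖ ≠ 0 →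
      (‖h₁‖^2)⁻¹ + (‖h₂‖^2)⁻¹ ≤ (‖h₃‖^2)⁻¹) := by
  subst e1 e2
  have main : ‖h₃‖^2 * (‖h₃ + f₁‖^2 + ‖h₃ + f₂‖^2) ≤ ‖h₃ + f₁‖^2 * ‖h₃ + f₂‖^2 := by
    rw [norm_add_sq_of_inner_eq_zero o1, norm_add_sq_of_inner_eq_zero o2]
    exact mul_add_add_le_add_mul_add (by positivity)
      (norm_sq_le_norm_mul_norm_of_inner_add_add_eq_zero o1 o2 o3)
  exact ⟨main, fun n1 n2 n3 =>
    inv_add_inv_le_inv_of_mul_add_le_mul (by positivity) (by positivity) (by positivity) main⟩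
end

section
/- Let g : [0,∞) → ℝ ∪ {−∞} be defined by g(t₀) = c + (1/2)∫₀^∞ [(n+m)/(1+t) − h(t+t₀)] dt where h : [0,∞) → [0,∞] is decreasing, right continuous, and satisfies (n+m)²/(C²+(n+m)t) ≤ h(t) ≤ (n+m)/t for all t > 0 (with C > 0 a constant and c = ((n+m)/2)log(2πe)). Then: (1) g(t₀+ε) − g(t₀) = (1/2)∫_{t₀}^{t₀+ε} h(t) dt for all ε > 0 whenever g(t₀) ≠ −∞; (2) g is increasing, concave, and continuous; (3) the right derivative of g at t exists and equals h(t)/2; (4) g(t₀) ≥ ((n+m)/2)·log(2πe·t₀). -/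
/-!
With `N = n + m`, the Cramér–Rao and Stam bounds sandwich the integrand `N/(1+t) - h(t+t₀)`
between functions `N((t+1)⁻¹ - (t+q)⁻¹)`, which are integrable with integral `N log q`; hence
`g` is never `-∞`, and the Stam bound with `q = t₀` gives the logarithmic lower bound.
Subtracting the defining integrals at `a ≤ b` telescopes:
`∫₀^∞ (h(t+a) - h(t+b)) dt = ∫_a^b h`, because `∫_{R+a}^{R+b} h → 0` as `h(t) ≤ N/t`.
So `g` is a primitive of `h/2`, and monotonicity, continuity, concavity and the right derivative
follow from `h` being nonnegative, decreasing and right continuous.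
-/

open MeasureTheory Filter Real Set Topology

lemma hasDerivAt_log_add_sub_log_add {p q t : ℝ} (hp : 0 < t + p) (hq : 0 < t + q) :
    HasDerivAt (fun x => log (x + p) - log (x + q)) ((t + p)⁻¹ - (t + q)⁻¹) t := by
  have hp' := ((hasDerivAt_id t).add_const p).log hp.ne'
  have hq' := ((hasDerivAt_id t).add_const q).log hq.ne'
  simp only [id, one_div] at hp' hq'
  exact hp'.sub hq'

lemma tendsto_log_add_sub_log_add_atTop (p q : ℝ) :
    Tendsto (fun x => log (x + p) - log (x + q)) atTop (𝓝 0) := by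
  simpa using (tendsto_log_comp_add_sub_log p).sub (tendsto_log_comp_add_sub_log q)

lemma integrableOn_inv_add_sub_inv_add {a p q : ℝ} (hp : 0 < a + p) (hq : 0 < a + q) :
    IntegrableOn (fun t => (t + p)⁻¹ - (t + q)⁻¹) (Ioi a) := by
  wlog hpq : p ≤ q generalizing p q
  · exact (this hq hp (le_of_not_ge hpq)).neg.congr_fun (fun t _ => neg_sub _ _) measurableSet_Ioi
  refine integrableOn_Ioi_deriv_of_nonneg'
    (fun t ht => hasDerivAt_log_add_sub_log_add (by linarith [mem_Ici.1 ht])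
      (by linarith [mem_Ici.1 ht])) (fun t ht => ?_) (tendsto_log_add_sub_log_add_atTop p q)
  have ht : a < t := ht
  exact sub_nonneg.2 (inv_anti₀ (by linarith) (by linarith))

lemma integral_inv_add_sub_inv_add {a p q : ℝ} (hp : 0 < a + p) (hq : 0 < a + q) :
    ∫ t in Ioi a, ((t + p)⁻¹ - (t + q)⁻¹) = log (a + q) - log (a + p) := by
  rw [integral_Ioi_of_hasDerivAt_of_tendsto'
    (fun t ht => hasDerivAt_log_add_sub_log_add (by linarith [mem_Ici.1 ht])
      (by linarith [mem_Ici.1 ht])) (integrableOn_inv_add_sub_inv_add hp hq)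
    (tendsto_log_add_sub_log_add_atTop p q)]
  ring

lemma AntitoneOn.sub_mul_le_integral {f : ℝ → ℝ} {a b : ℝ} (hf : AntitoneOn f (Icc a b))
    (hab : a ≤ b) : (b - a) * f b ≤ ∫ t in a..b, f t := by
  have := intervalIntegral.integral_mono_on (μ := volume) hab intervalIntegrable_const
    (hf.mono (uIcc_of_le hab).le).intervalIntegrable
    (fun t ht => hf ht (right_mem_Icc.2 hab) ht.2)
  simpa [mul_comm] using this

lemma AntitoneOn.integral_le_sub_mul {f : ℝ → ℝ} {a b : ℝ} (hf : AntitoneOn f (Icc a b))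
    (hab : a ≤ b) : ∫ t in a..b, f t ≤ (b - a) * f a := by
  have := intervalIntegral.integral_mono_on (μ := volume) hab
    (hf.mono (uIcc_of_le hab).le).intervalIntegrable intervalIntegrable_const
    (fun t ht => hf (left_mem_Icc.2 hab) ht ht.1)
  simpa [mul_comm] using this

lemma AntitoneOn.integral_Ioi_sub_comp_add {f : ℝ → ℝ} {a b : ℝ} (hf : AntitoneOn f (Ici a))
    (hf_lim : Tendsto f atTop (𝓝 0)) (hab : a ≤ b)
    (hint : IntegrableOn (fun t => f (t + a) - f (t + b)) (Ioi 0)) :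
    ∫ t in Ioi 0, (f (t + a) - f (t + b)) = ∫ t in a..b, f t := by
  have hii : ∀ x y, a ≤ x → x ≤ y → IntervalIntegrable f volume x y := fun x y hx hxy =>
    (hf.mono ((uIcc_of_le hxy).trans_subset (Icc_subset_Ici_self.trans (Ici_subset_Ici.2 hx))))
      |>.intervalIntegrable
  have htail : Tendsto (fun R => ∫ t in (R + a)..(R + b), f t) atTop (𝓝 0) := by
    have hlim : ∀ c, Tendsto (fun R => (b - a) * f (R + c)) atTop (𝓝 0) := fun c => by
      simpa using (hf_lim.comp (tendsto_atTop_add_const_right _ c tendsto_id)).const_mul (b - a)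
    refine tendsto_of_tendsto_of_tendsto_of_le_of_le' (hlim b) (hlim a) ?_ ?_
    all_goals
      filter_upwards [eventually_ge_atTop 0] with R hR
      have hanti : AntitoneOn f (Icc (R + a) (R + b)) :=
        hf.mono (Icc_subset_Ici_self.trans (Ici_subset_Ici.2 (by linarith)))
    · simpa using hanti.sub_mul_le_integral (by linarith)
    · simpa using hanti.integral_le_sub_mul (by linarith)
  have hpartial : ∀ᶠ R in atTop, ∫ t in 0..R, (f (t + a) - f (t + b))
      = (∫ t in a..b, f t) - ∫ t in (R + a)..(R + b), f t := by
    filter_upwards [eventually_ge_atTop 0] with R hR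
    rw [intervalIntegral.integral_sub, intervalIntegral.integral_comp_add_right,
      intervalIntegral.integral_comp_add_right, zero_add, zero_add]
    · exact intervalIntegral.integral_interval_sub_interval_comm (hii _ _ le_rfl (by linarith))
        (hii _ _ hab (by linarith)) (hii _ _ le_rfl hab)
    · simpa using (hii a (R + a) le_rfl (by linarith)).comp_add_right a
    · simpa using (hii b (R + b) hab (by linarith)).comp_add_right b
  refine tendsto_nhds_unique (intervalIntegral_tendsto_integral_Ioi 0 hint tendsto_id) ?_
  simpa using (tendsto_const_nhds.sub htail).congr' (hpartial.mono fun R hR => hR.symm)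

section Primitive

variable {F f : ℝ → ℝ} {x₀ : ℝ}

lemma monotoneOn_of_eq_add_integral
    (hF : ∀ a b, x₀ ≤ a → a ≤ b → F b = F a + ∫ t in a..b, f t)
    (hf₀ : ∀ t ∈ Ici x₀, 0 ≤ f t) : MonotoneOn F (Ici x₀) := by
  intro a ha b _ hab
  rw [hF a b ha hab, le_add_iff_nonneg_right]
  exact intervalIntegral.integral_nonneg hab fun t ht => hf₀ t (ha.trans ht.1)

lemma lipschitzOnWith_of_eq_add_integral
    (hF : ∀ a b, x₀ ≤ a → a ≤ b → F b = F a + ∫ t in a..b, f t)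
    (hf : AntitoneOn f (Ici x₀)) (hf₀ : ∀ t ∈ Ici x₀, 0 ≤ f t) :
    LipschitzOnWith (f x₀).toNNReal F (Ici x₀) := by
  have hmono := monotoneOn_of_eq_add_integral hF hf₀
  refine LipschitzOnWith.of_dist_le' fun a ha b hb => ?_
  wlog hab : a ≤ b generalizing a b
  · rw [dist_comm, dist_comm a]
    exact this b hb a ha (le_of_not_ge hab)
  have hanti : AntitoneOn f (Icc a b) := hf.mono (Icc_subset_Ici_self.trans (Ici_subset_Ici.2 ha))
  have hbound : ∫ t in a..b, f t ≤ (b - a) * f x₀ :=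
    (hanti.integral_le_sub_mul hab).trans
      (mul_le_mul_of_nonneg_left (hf self_mem_Ici ha ha) (sub_nonneg.2 hab))
  rw [Real.dist_eq, Real.dist_eq, abs_sub_comm, abs_of_nonneg (sub_nonneg.2 (hmono ha hb hab)),
    abs_sub_comm, abs_of_nonneg (sub_nonneg.2 hab), hF a b ha hab]
  linarith

lemma concaveOn_of_eq_add_integral
    (hF : ∀ a b, x₀ ≤ a → a ≤ b → F b = F a + ∫ t in a..b, f t)
    (hf : AntitoneOn f (Ici x₀)) : ConcaveOn ℝ (Ici x₀) F := by
  refine concaveOn_of_slope_anti_adjacent (convex_Ici x₀) fun {x y z} hx _ hxy hyz => ?_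
  have hy : x₀ ≤ y := hx.trans hxy.le
  have hsub : ∀ {a}, x₀ ≤ a → ∀ b, AntitoneOn f (Icc a b) := fun ha _ =>
    hf.mono (Icc_subset_Ici_self.trans (Ici_subset_Ici.2 ha))
  rw [hF y z hy hyz.le, hF x y hx hxy.le, add_sub_cancel_left, add_sub_cancel_left]
  calc (∫ t in y..z, f t) / (z - y) ≤ f y :=
        (div_le_iff₀ (by linarith)).2 (by linarith [(hsub hy z).integral_le_sub_mul hyz.le])
    _ ≤ (∫ t in x..y, f t) / (y - x) :=
        (le_div_iff₀ (by linarith)).2 (by linarith [(hsub hx y).sub_mul_le_integral hxy.le])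

lemma tendsto_slope_of_eq_add_integral
    (hF : ∀ a b, x₀ ≤ a → a ≤ b → F b = F a + ∫ t in a..b, f t)
    (hf : AntitoneOn f (Ici x₀)) {t : ℝ} (ht : x₀ ≤ t) (hfc : ContinuousWithinAt f (Ici t) t) :
    Tendsto (fun ε => (F (t + ε) - F t) / ε) (𝓝[>] 0) (𝓝 (f t)) := by
  have hshift : Tendsto (fun ε : ℝ => t + ε) (𝓝[>] 0) (𝓝[Ici t] t) :=
    tendsto_nhdsWithin_of_tendsto_nhds_of_eventually_within _
      (by simpa using (continuous_const_add t).continuousWithinAt.tendsto (x := 0) (s := Ioi 0))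
      (eventually_nhdsWithin_of_forall fun ε (hε : 0 < ε) => by simp [hε.le])
  refine tendsto_of_tendsto_of_tendsto_of_le_of_le' (hfc.tendsto.comp hshift) tendsto_const_nhds
    ?_ ?_
  all_goals
    filter_upwards [self_mem_nhdsWithin] with ε (hε : 0 < ε)
    have hanti : AntitoneOn f (Icc t (t + ε)) :=
      hf.mono (Icc_subset_Ici_self.trans (Ici_subset_Ici.2 ht))
    rw [hF t (t + ε) ht (by linarith), add_sub_cancel_left]
  · simpa [le_div_iff₀ hε, mul_comm] using hanti.sub_mul_le_integral (by linarith)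
  · simpa [div_le_iff₀ hε, mul_comm] using hanti.integral_le_sub_mul (by linarith)

end Primitive

lemma sq_div_add_mul_eq_div_add_div {N u : ℝ} (C : ℝ) (hN : 0 ≤ N) (hu : 0 < u) :
    N ^ 2 / (C ^ 2 + N * u) = N / (u + C ^ 2 / N) := by
  rcases hN.eq_or_lt with rfl | hN
  · simp
  · field_simp
    ring

noncomputable def flowEntropy (N : ℝ) (h : ℝ → ℝ) (t₀ : ℝ) : ℝ :=
  N / 2 * log (2 * π * exp 1) + 1 / 2 * ∫ t in Ioi 0, (N / (1 + t) - h (t + t₀))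

section FlowEntropy

variable {N C : ℝ} {h : ℝ → ℝ}

lemma integrableOn_entropy_integrand (hN : 0 ≤ N)
    (hmono : AntitoneOn h (Ici 0)) (hnn : ∀ t ∈ Ici (0:ℝ), 0 ≤ h t)
    (hlow : ∀ t > (0:ℝ), N ^ 2 / (C ^ 2 + N * t) ≤ h t) (hup : ∀ t > (0:ℝ), h t ≤ N / t)
    {t₀ : ℝ} (ht₀ : 0 ≤ t₀) :
    IntegrableOn (fun t => N / (1 + t) - h (t + t₀)) (Ioi 0) := by
  have hmeas : ∀ s ⊆ Ioi (0:ℝ), MeasurableSet s →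
      AEStronglyMeasurable (fun t => N / (1 + t) - h (t + t₀)) (volume.restrict s) :=
    fun s hs hsm => ((measurable_const.div (measurable_const.add measurable_id)).aemeasurable.sub
      (aemeasurable_restrict_of_antitoneOn hsm fun x hx y hy hxy =>
        hmono (mem_Ici.2 (by linarith [mem_Ioi.1 (hs hx)]))
          (mem_Ici.2 (by linarith [mem_Ioi.1 (hs hy)])) (by linarith))).aestronglyMeasurable
  rw [← Ioc_union_Ioi_eq_Ioi zero_le_one]
  refine IntegrableOn.union ?_ ?_
  · refine integrable_of_le_of_le (g₁ := fun _ => -h 0) (g₂ := fun _ => N)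
      (hmeas _ Ioc_subset_Ioi_self measurableSet_Ioc) ?_ ?_
      (integrableOn_const measure_Ioc_lt_top.ne) (integrableOn_const measure_Ioc_lt_top.ne)
    all_goals
      filter_upwards [ae_restrict_mem measurableSet_Ioc] with t (ht : t ∈ Ioc 0 1)
      have ht : 0 < t := ht.1
      have hdiv : N / (1 + t) ≤ N := div_le_self hN (by linarith)
      have hh : 0 ≤ h (t + t₀) := hnn _ (mem_Ici.2 (by linarith))
    · have : h (t + t₀) ≤ h 0 := hmono self_mem_Ici (mem_Ici.2 (by linarith)) (by linarith)
      have : 0 ≤ N / (1 + t) := by positivity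
      linarith
    · linarith
  · have hrw : ∀ q, (fun t => N * ((t + 1)⁻¹ - (t + q)⁻¹)) = fun t => N / (1 + t) - N / (t + q) :=
      fun q => by funext t; rw [add_comm t 1]; ring
    have hint : ∀ q, 0 ≤ q → IntegrableOn (fun t => N / (1 + t) - N / (t + q)) (Ioi 1) :=
      fun q hq => hrw q ▸ (integrableOn_inv_add_sub_inv_add (by norm_num) (by linarith)).const_mul N
    -- The Cramér–Rao bound is the Stam bound with time shifted by `C² / N`.
    refine integrable_of_le_of_le (hmeas _ (Ioi_subset_Ioi zero_le_one) measurableSet_Ioi) ?_ ?_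
      (hint t₀ ht₀) (hint (t₀ + C ^ 2 / N) (by positivity))
    all_goals
      filter_upwards [ae_restrict_mem measurableSet_Ioi] with t (ht : 1 < t)
    · linarith [hup (t + t₀) (by linarith)]
    · have := hlow (t + t₀) (by linarith)
      rw [sq_div_add_mul_eq_div_add_div C hN (by linarith), add_assoc] at this
      linarith

lemma flowEntropy_eq_add_integral (hN : 0 ≤ N)
    (hmono : AntitoneOn h (Ici 0)) (hnn : ∀ t ∈ Ici (0:ℝ), 0 ≤ h t)
    (hlow : ∀ t > (0:ℝ), N ^ 2 / (C ^ 2 + N * t) ≤ h t) (hup : ∀ t > (0:ℝ), h t ≤ N / t)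
    {a b : ℝ} (ha : 0 ≤ a) (hab : a ≤ b) :
    flowEntropy N h b = flowEntropy N h a + ∫ t in a..b, h t / 2 := by
  have hint := fun {t₀ : ℝ} (ht₀ : 0 ≤ t₀) =>
    integrableOn_entropy_integrand hN hmono hnn hlow hup ht₀
  have hlim : Tendsto h atTop (𝓝 0) :=
    squeeze_zero' (eventually_ge_atTop 0 |>.mono hnn)
      (eventually_gt_atTop 0 |>.mono hup) (tendsto_const_nhds.div_atTop tendsto_id)
  have hdiff : (fun t => (N / (1 + t) - h (t + b)) - (N / (1 + t) - h (t + a)))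
      = fun t => h (t + a) - h (t + b) := by
    funext t; ring
  have key := (hmono.mono (Ici_subset_Ici.2 ha)).integral_Ioi_sub_comp_add hlim hab
    (hdiff ▸ (hint (ha.trans hab)).sub (hint ha))
  rw [← hdiff, integral_sub (hint (ha.trans hab)) (hint ha)] at key
  rw [flowEntropy, flowEntropy, intervalIntegral.integral_div, ← key]
  ring

lemma log_le_flowEntropy (hN : 0 ≤ N)
    (hmono : AntitoneOn h (Ici 0)) (hnn : ∀ t ∈ Ici (0:ℝ), 0 ≤ h t)
    (hlow : ∀ t > (0:ℝ), N ^ 2 / (C ^ 2 + N * t) ≤ h t) (hup : ∀ t > (0:ℝ), h t ≤ N / t)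
    {t₀ : ℝ} (ht₀ : 0 < t₀) :
    N / 2 * log (2 * π * exp 1 * t₀) ≤ flowEntropy N h t₀ := by
  have hstam : ∫ t in Ioi (0:ℝ), N * ((t + 1)⁻¹ - (t + t₀)⁻¹)
      ≤ ∫ t in Ioi 0, (N / (1 + t) - h (t + t₀)) := by
    refine setIntegral_mono_on
      ((integrableOn_inv_add_sub_inv_add (by norm_num) (by simpa)).const_mul N)
      (integrableOn_entropy_integrand hN hmono hnn hlow hup ht₀.le) measurableSet_Ioi
      fun t (ht : 0 < t) => ?_
    have := hup (t + t₀) (by linarith)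
    rw [add_comm t 1]
    linarith [show N * ((1 + t)⁻¹ - (t + t₀)⁻¹) = N / (1 + t) - N / (t + t₀) by ring]
  rw [integral_const_mul, integral_inv_add_sub_inv_add (by norm_num) (by simpa)] at hstam
  rw [flowEntropy, log_mul (by positivity) ht₀.ne']
  simp only [zero_add, log_one, sub_zero] at hstam
  linarith

end FlowEntropy

theorem stmt10_general (n m : ℕ) (C : ℝ) (h : ℝ → ℝ) (g : ℝ → EReal)
    (hmono : AntitoneOn h (Ici 0))
    (hrc : ∀ t ∈ Ici (0:ℝ), ContinuousWithinAt h (Ici t) t)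
    (hnn : ∀ t ∈ Ici (0:ℝ), 0 ≤ h t)
    (hlow : ∀ t > (0:ℝ), ((n+m : ℝ))^2 / (C^2 + (n+m) * t) ≤ h t)
    (hup : ∀ t > (0:ℝ), h t ≤ (n+m : ℝ) / t)
    (hg : ∀ t₀ ∈ Ici (0:ℝ),
      (IntegrableOn (fun t => (n+m : ℝ)/(1+t) - h (t + t₀)) (Ioi 0) ∧
        g t₀ = (((n+m : ℝ)/2 * Real.log (2 * π * Real.exp 1)
          + (1/2) * ∫ t in Ioi (0:ℝ), ((n+m : ℝ)/(1+t) - h (t + t₀)) : ℝ) : EReal))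
      ∨ (¬ IntegrableOn (fun t => (n+m : ℝ)/(1+t) - h (t + t₀)) (Ioi 0) ∧ g t₀ = ⊥)) :
    (∀ t₀ ∈ Ici (0:ℝ), g t₀ ≠ ⊥ → ∀ ε > (0:ℝ),
      g (t₀ + ε) = g t₀ + (((1/2) * ∫ t in t₀..(t₀+ε), h t : ℝ) : EReal)) ∧
    MonotoneOn g (Ici 0) ∧
    ContinuousOn g (Ici 0) ∧
    (∀ a ∈ Ici (0:ℝ), ∀ b ∈ Ici (0:ℝ), ∀ s ∈ Icc (0:ℝ) 1,
      ((s : EReal) * g a + (((1 - s : ℝ)) : EReal) * g b) ≤ g (s * a + (1 - s) * b)) ∧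
    (∀ t ∈ Ici (0:ℝ), g t ≠ ⊥ →
      Tendsto (fun ε : ℝ => (g (t + ε) - g t) * (((1/ε : ℝ)) : EReal))
        (nhdsWithin 0 (Ioi 0)) (nhds (((h t / 2 : ℝ)) : EReal))) ∧
    (∀ t₀ > (0:ℝ),
      ((((n+m : ℝ)/2) * Real.log (2 * π * Real.exp 1 * t₀) : ℝ) : EReal) ≤ g t₀) := by
  have hN : (0:ℝ) ≤ n + m := by positivity
  have hG : ∀ t ∈ Ici (0:ℝ), g t = flowEntropy (n + m) h t := fun t ht =>
    ((hg t ht).resolve_right fun hbot =>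
      hbot.1 (integrableOn_entropy_integrand hN hmono hnn hlow hup ht)).2
  have hF : ∀ a b, 0 ≤ a → a ≤ b →
      flowEntropy (n + m) h b = flowEntropy (n + m) h a + ∫ t in a..b, h t / 2 :=
    fun a b ha hab => flowEntropy_eq_add_integral hN hmono hnn hlow hup ha hab
  have hanti : AntitoneOn (fun t => h t / 2) (Ici 0) := fun a ha b hb hab =>
    div_le_div_of_nonneg_right (hmono ha hb hab) zero_le_two
  have hhalf : ∀ t ∈ Ici (0:ℝ), 0 ≤ h t / 2 := fun t ht => div_nonneg (hnn t ht) zero_le_two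
  refine ⟨fun t₀ ht₀ _ ε hε => ?_, fun a ha b hb hab => ?_, ?_, fun a ha b hb s hs => ?_,
    fun t ht _ => ?_, fun t₀ ht₀ => ?_⟩
  · rw [hG t₀ ht₀, hG _ (add_nonneg ht₀ hε.le), hF t₀ _ ht₀ (by linarith), intervalIntegral.integral_div,
      div_eq_inv_mul, one_div, EReal.coe_add]
  · rw [hG a ha, hG b hb, EReal.coe_le_coe_iff]
    exact monotoneOn_of_eq_add_integral hF hhalf ha hb hab
  · exact (continuous_coe_real_ereal.comp_continuousOn
      (lipschitzOnWith_of_eq_add_integral hF hanti hhalf).continuousOn).congr hG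
  · rw [hG a ha, hG b hb,
      hG _ (add_nonneg (mul_nonneg hs.1 ha) (mul_nonneg (sub_nonneg.2 hs.2) hb))]
    exact_mod_cast (concaveOn_of_eq_add_integral hF hanti).2 ha hb hs.1 (sub_nonneg.2 hs.2)
      (by ring)
  · refine (EReal.tendsto_coe.2 (tendsto_slope_of_eq_add_integral hF hanti ht
      ((hrc t ht).div_const 2))).congr' ?_
    filter_upwards [self_mem_nhdsWithin] with ε (hε : 0 < ε)
    rw [hG t ht, hG _ (add_nonneg ht hε.le), div_eq_mul_one_div, EReal.coe_mul, EReal.coe_sub]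
  · rw [hG t₀ ht₀.le, EReal.coe_le_coe_iff]
    exact log_le_flowEntropy hN hmono hnn hlow hup ht₀

/-- Properties of the entropy `g(t₀) = c + (1/2)∫₀^∞[(n+m)/(1+t) − h(t+t₀)]dt`
along the semicircular flow, where `h` (the bi-free Fisher information) is
decreasing, right continuous, nonnegative, and satisfies the Cramer–Rao lower
bound and the Stam upper bound `(n+m)²/(C²+(n+m)t) ≤ h(t) ≤ (n+m)/t`, and where
`c = ((n+m)/2)·log(2πe)`.  The value `g(t₀)` is `−∞` exactly when the integrand
fails to be integrable.  Then:
(1) `g(t₀+ε) − g(t₀) = (1/2)∫_{t₀}^{t₀+ε} h(t)dt` whenever `g(t₀) ≠ −∞`;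
(2) `g` is increasing, continuous and concave on `[0,∞)`;
(3) the right derivative of `g` at `t` exists and equals `h(t)/2`;
(4) `g(t₀) ≥ ((n+m)/2)·log(2πe·t₀)`. -/
theorem stmt10 (n m : ℕ) (C : ℝ) (hC : 0 < C) (h : ℝ → ℝ) (g : ℝ → EReal)
    (hmono : AntitoneOn h (Ici 0))
    (hrc : ∀ t ∈ Ici (0:ℝ), ContinuousWithinAt h (Ici t) t)
    (hnn : ∀ t ∈ Ici (0:ℝ), 0 ≤ h t)
    (hlow : ∀ t > (0:ℝ), ((n+m : ℝ))^2 / (C^2 + (n+m) * t) ≤ h t)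
    (hup : ∀ t > (0:ℝ), h t ≤ (n+m : ℝ) / t)
    (hg : ∀ t₀ ∈ Ici (0:ℝ),
      (IntegrableOn (fun t => (n+m : ℝ)/(1+t) - h (t + t₀)) (Ioi 0) ∧
        g t₀ = (((n+m : ℝ)/2 * Real.log (2 * π * Real.exp 1)
          + (1/2) * ∫ t in Ioi (0:ℝ), ((n+m : ℝ)/(1+t) - h (t + t₀)) : ℝ) : EReal))
      ∨ (¬ IntegrableOn (fun t => (n+m : ℝ)/(1+t) - h (t + t₀)) (Ioi 0) ∧ g t₀ = ⊥)) :
    (∀ t₀ ∈ Ici (0:ℝ), g t₀ ≠ ⊥ → ∀ ε > (0:ℝ),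
      g (t₀ + ε) = g t₀ + (((1/2) * ∫ t in t₀..(t₀+ε), h t : ℝ) : EReal)) ∧
    MonotoneOn g (Ici 0) ∧
    ContinuousOn g (Ici 0) ∧
    (∀ a ∈ Ici (0:ℝ), ∀ b ∈ Ici (0:ℝ), ∀ s ∈ Icc (0:ℝ) 1,
      ((s : EReal) * g a + (((1 - s : ℝ)) : EReal) * g b) ≤ g (s * a + (1 - s) * b)) ∧
    (∀ t ∈ Ici (0:ℝ), g t ≠ ⊥ →
      Tendsto (fun ε : ℝ => (g (t + ε) - g t) * (((1/ε : ℝ)) : EReal))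
        (nhdsWithin 0 (Ioi 0)) (nhds (((h t / 2 : ℝ)) : EReal))) ∧
    (∀ t₀ > (0:ℝ),
      ((((n+m : ℝ)/2) * Real.log (2 * π * Real.exp 1 * t₀) : ℝ) : EReal) ≤ g t₀) :=
  stmt10_general n m C h g hmono hrc hnn hlow hup hg
end

section
/- (Scaling of non-microstate bi-free entropy.) With χ*(X⊔Y) defined via the integral of Fisher informations of semicircular perturbations, for every λ ∈ ℝ \ {0}: χ*(λX₁,…,λXₙ ⊔ λY₁,…,λYₘ) = (n+m)·log|λ| + χ*(X₁,…,Xₙ ⊔ Y₁,…,Yₘ). In abstract form: if h : (0,∞) → [0,∞] satisfies the scaled-Fisher relation h_λ(t) = λ^{−2}h(tλ^{−2}) and g_λ := c + (1/2)∫₀^∞[(n+m)/(1+t) − h_λ(t)]dt, then g_λ = g₁ + (n+m)log|λ| whenever g₁ > −∞. -/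
open MeasureTheory Set Real

/-!
The substitution `s = t λ⁻²` turns `t ↦ λ⁻² h(t λ⁻²)` into `h` and preserves integrals over
`(0, ∞)`, so after substitution the scaled integrand differs from the unscaled one by
`(n+m)(1/(1+t) - 1/(λ² + t))`. This has the antiderivative `(n+m)(log(1+t) - log(λ²+t))`,
which vanishes at infinity, so it contributes `(n+m) log λ² = 2(n+m) log |λ|`.
-/

lemma hasDerivAt_log_one_add_sub_log_add {a t : ℝ} (ha : 0 < a) (ht : 0 ≤ t) :
    HasDerivAt (fun t => log (1 + t) - log (a + t)) (1 / (1 + t) - 1 / (a + t)) t := by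
  have d1 := ((hasDerivAt_id t).const_add 1).log (by positivity)
  have d2 := ((hasDerivAt_id t).const_add a).log (by positivity)
  exact d1.sub d2

lemma tendsto_log_one_add_sub_log_add_atTop (a : ℝ) :
    Filter.Tendsto (fun t => log (1 + t) - log (a + t)) Filter.atTop (nhds 0) := by
  have hquot : Filter.Tendsto (fun t : ℝ => 1 + (1 - a) / (a + t)) Filter.atTop (nhds 1) := by
    simpa using (tendsto_const_nhds.div_atTop
      (Filter.tendsto_atTop_add_const_left _ a Filter.tendsto_id)).const_add 1
  have hlog := (continuousAt_log one_ne_zero).tendsto.comp hquot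
  rw [log_one] at hlog
  refine hlog.congr' ?_
  filter_upwards [Filter.eventually_gt_atTop (max 0 (-a))] with t ht
  have h1 : 1 + t ≠ 0 := by linarith [le_max_left 0 (-a)]
  have h2 : a + t ≠ 0 := by linarith [le_max_right 0 (-a)]
  rw [Function.comp_apply, ← log_div h1 h2]
  congr 1
  field_simp
  ring

lemma integrableOn_Ioi_one_div_one_add_sub_one_div_add {a : ℝ} (ha : 0 < a) :
    IntegrableOn (fun t => 1 / (1 + t) - 1 / (a + t)) (Ioi 0) ∧
      ∫ t in Ioi (0 : ℝ), (1 / (1 + t) - 1 / (a + t)) = log a := by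
  have hderiv : ∀ t ∈ Ici (0 : ℝ), HasDerivAt (fun t => log (1 + t) - log (a + t))
      (1 / (1 + t) - 1 / (a + t)) t := fun t ht => hasDerivAt_log_one_add_sub_log_add ha ht
  have hlim := tendsto_log_one_add_sub_log_add_atTop a
  -- the integrand has the sign of `a - 1`
  rcases le_total 1 a with h1a | ha1
  · have hpos : ∀ t ∈ Ioi (0 : ℝ), 0 ≤ 1 / (1 + t) - 1 / (a + t) := fun t ht =>
      sub_nonneg.2 (one_div_le_one_div_of_le (by linarith [ht.out]) (by linarith))
    refine ⟨integrableOn_Ioi_deriv_of_nonneg' hderiv hpos hlim, ?_⟩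
    rw [integral_Ioi_of_hasDerivAt_of_nonneg' hderiv hpos hlim]
    simp
  · have hneg : ∀ t ∈ Ioi (0 : ℝ), 1 / (1 + t) - 1 / (a + t) ≤ 0 := fun t ht =>
      sub_nonpos.2 (one_div_le_one_div_of_le (by linarith [ht.out]) (by linarith))
    refine ⟨integrableOn_Ioi_deriv_of_nonpos' hderiv hneg hlim, ?_⟩
    rw [integral_Ioi_of_hasDerivAt_of_nonpos' hderiv hneg hlim]
    simp

lemma inv_mul_div_one_add_mul_inv {a : ℝ} (ha : a ≠ 0) (c t : ℝ) :
    a⁻¹ * (c / (1 + t * a⁻¹)) = c / (a + t) := by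
  rw [inv_mul_eq_div, div_div, add_mul, one_mul, inv_mul_cancel_right₀ ha]

lemma integrableOn_Ioi_inv_mul_comp_mul_inv {f : ℝ → ℝ} (hf : IntegrableOn f (Ioi 0))
    {a : ℝ} (ha : 0 < a) :
    IntegrableOn (fun t => a⁻¹ * f (t * a⁻¹)) (Ioi 0) ∧
      ∫ t in Ioi (0 : ℝ), a⁻¹ * f (t * a⁻¹) = ∫ t in Ioi (0 : ℝ), f t := by
  have hinv : 0 < a⁻¹ := inv_pos.2 ha
  have hcomp : IntegrableOn (fun t => f (t * a⁻¹)) (Ioi 0) :=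
    (integrableOn_Ioi_comp_mul_right_iff f 0 hinv).2 (by simpa using hf)
  refine ⟨hcomp.const_mul _, ?_⟩
  rw [integral_const_mul, integral_comp_mul_right_Ioi f 0 hinv, zero_mul, inv_inv, smul_eq_mul,
    inv_mul_cancel_left₀ ha.ne']

lemma integrableOn_Ioi_sub_inv_mul_comp_mul_inv {c a : ℝ} (ha : 0 < a) {h : ℝ → ℝ}
    (hint : IntegrableOn (fun t => c / (1 + t) - h t) (Ioi 0)) :
    IntegrableOn (fun t => c / (1 + t) - a⁻¹ * h (t * a⁻¹)) (Ioi 0) ∧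
      ∫ t in Ioi (0 : ℝ), (c / (1 + t) - a⁻¹ * h (t * a⁻¹))
        = (∫ t in Ioi (0 : ℝ), (c / (1 + t) - h t)) + c * log a := by
  obtain ⟨hscaled, hscaled_eq⟩ := integrableOn_Ioi_inv_mul_comp_mul_inv hint ha
  obtain ⟨hlog, hlog_eq⟩ := integrableOn_Ioi_one_div_one_add_sub_one_div_add ha
  have hsplit : (fun t => c / (1 + t) - a⁻¹ * h (t * a⁻¹))
      = fun t => a⁻¹ * (c / (1 + t * a⁻¹) - h (t * a⁻¹))
          + c * (1 / (1 + t) - 1 / (a + t)) := by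
    funext t
    rw [mul_sub, inv_mul_div_one_add_mul_inv ha.ne']
    ring
  rw [hsplit]
  exact ⟨hscaled.add (hlog.const_mul c), by
    rw [integral_add hscaled (hlog.const_mul c), integral_const_mul c, hscaled_eq, hlog_eq]⟩

theorem stmt11_general (n m : ℕ) (lam : ℝ) (hlam : lam ≠ 0) (h : ℝ → ℝ)
    (hint : IntegrableOn (fun t => (n+m : ℝ)/(1+t) - h t) (Ioi 0)) :
    IntegrableOn (fun t => (n+m : ℝ)/(1+t) - (lam^2)⁻¹ * h (t * (lam^2)⁻¹)) (Ioi 0) ∧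
    (n+m : ℝ)/2 * Real.log (2 * π * Real.exp 1)
        + (1/2) * ∫ t in Ioi (0:ℝ), ((n+m : ℝ)/(1+t) - (lam^2)⁻¹ * h (t * (lam^2)⁻¹))
      = ((n+m : ℝ)/2 * Real.log (2 * π * Real.exp 1)
          + (1/2) * ∫ t in Ioi (0:ℝ), ((n+m : ℝ)/(1+t) - h t))
        + (n+m : ℝ) * Real.log |lam| := by
  obtain ⟨hscaled, hscaled_eq⟩ :=
    integrableOn_Ioi_sub_inv_mul_comp_mul_inv (by positivity : 0 < lam ^ 2) hint
  refine ⟨hscaled, ?_⟩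
  rw [hscaled_eq, ← sq_abs lam, log_pow]
  push_cast
  ring

/-- Scaling of non-microstate bi-free entropy,
`χ*(λX ⊔ λY) = (n+m)·log|λ| + χ*(X ⊔ Y)`, in abstract form: if the Fisher
information `h` along the semicircular flow is scaled to `h_λ(t) = λ⁻²·h(t·λ⁻²)`
and `g_λ := ((n+m)/2)log(2πe) + (1/2)∫₀^∞[(n+m)/(1+t) − h_λ(t)]dt`, then
`g_λ = g₁ + (n+m)·log|λ|` whenever `g₁ > −∞` (i.e. whenever the integrand for
`λ = 1` is integrable). -/
theorem stmt11 (n m : ℕ) (lam : ℝ) (hlam : lam ≠ 0) (h : ℝ → ℝ)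
    (hnn : ∀ t > (0:ℝ), 0 ≤ h t)
    (hint : IntegrableOn (fun t => (n+m : ℝ)/(1+t) - h t) (Ioi 0)) :
    IntegrableOn (fun t => (n+m : ℝ)/(1+t) - (lam^2)⁻¹ * h (t * (lam^2)⁻¹)) (Ioi 0) ∧
    (n+m : ℝ)/2 * Real.log (2 * π * Real.exp 1)
        + (1/2) * ∫ t in Ioi (0:ℝ), ((n+m : ℝ)/(1+t) - (lam^2)⁻¹ * h (t * (lam^2)⁻¹))
      = ((n+m : ℝ)/2 * Real.log (2 * π * Real.exp 1)
          + (1/2) * ∫ t in Ioi (0:ℝ), ((n+m : ℝ)/(1+t) - h t))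
        + (n+m : ℝ) * Real.log |lam| :=
  stmt11_general n m lam hlam h hint
end

section
/- (Lower bound from finite Fisher information.) Suppose λ := Φ*(X⊔Y : (B_ℓ,B_r)) < ∞ and the Stam inequality gives Φ*(X+√tS ⊔ Y+√tT) ≤ (n+m)/((n+m)/λ + t) for all t > 0. Then χ*(X⊔Y : (B_ℓ,B_r)) ≥ ((n+m)/2)·log(2π(n+m)e/λ) > −∞. Abstractly: if h(t) ≤ (n+m)/(a+t) with a = (n+m)/λ > 0, then ((n+m)/2)log(2πe) + (1/2)∫₀^∞[(n+m)/(1+t)−h(t)]dt ≥ ((n+m)/2)log(2πe) + ((n+m)/2)log a. -/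
/-!
Integrating `h t ≤ N / (a + t)` gives
`∫₀^∞ (N / (1 + t) - h t) dt ≥ N ∫₀^∞ (1 / (1 + t) - 1 / (a + t)) dt`, and the last integral is `log a`: its antiderivative `log (1 + t) - log (a + t)` tends to `0` at
infinity. With `a = N / λ` the claim follows from `log (2πNe / λ) = log (2πe) + log a`.
-/

open MeasureTheory Set Real Filter Topology

section LogDifference

variable {a b : ℝ}

lemma hasDerivAt_log_add_sub_log_add_s13 (ha : 0 < a) (hb : 0 < b) {t : ℝ} (ht : 0 ≤ t) :
    HasDerivAt (fun s => log (b + s) - log (a + s)) ((b + t)⁻¹ - (a + t)⁻¹) t := by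
  have hb' : HasDerivAt (fun s => log (b + s)) (b + t)⁻¹ t := by
    simpa using ((hasDerivAt_id t).const_add b).log (by simp; positivity)
  have ha' : HasDerivAt (fun s => log (a + s)) (a + t)⁻¹ t := by
    simpa using ((hasDerivAt_id t).const_add a).log (by simp; positivity)
  exact hb'.sub ha'

lemma tendsto_log_add_sub_log_add (a b : ℝ) :
    Tendsto (fun s => log (b + s) - log (a + s)) atTop (𝓝 0) := by
  have h := (tendsto_log_comp_add_sub_log b).sub (tendsto_log_comp_add_sub_log a)
  rw [sub_zero] at h
  refine h.congr fun s => ?_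
  simp only [add_comm s]
  ring

lemma integrableOn_Ioi_inv_add_sub_inv_add_of_le (hb : 0 < b) (hba : b ≤ a) :
    IntegrableOn (fun t => (b + t)⁻¹ - (a + t)⁻¹) (Ioi 0) :=
  integrableOn_Ioi_deriv_of_nonneg'
    (fun _ ht => hasDerivAt_log_add_sub_log_add_s13 (hb.trans_le hba) hb ht)
    (fun t (ht : 0 < t) => sub_nonneg.2 (inv_anti₀ (by positivity) (by linarith)))
    (tendsto_log_add_sub_log_add a b)

lemma integrableOn_Ioi_inv_add_sub_inv_add (ha : 0 < a) (hb : 0 < b) :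
    IntegrableOn (fun t => (b + t)⁻¹ - (a + t)⁻¹) (Ioi 0) := by
  rcases le_total b a with hba | hab
  · exact integrableOn_Ioi_inv_add_sub_inv_add_of_le hb hba
  · simpa only [Pi.neg_def, neg_sub] using (integrableOn_Ioi_inv_add_sub_inv_add_of_le ha hab).neg

lemma integral_Ioi_inv_add_sub_inv_add (ha : 0 < a) (hb : 0 < b) :
    ∫ t in Ioi (0 : ℝ), ((b + t)⁻¹ - (a + t)⁻¹) = log a - log b := by
  rw [integral_Ioi_of_hasDerivAt_of_tendsto'
    (fun _ ht => hasDerivAt_log_add_sub_log_add_s13 ha hb ht)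
    (integrableOn_Ioi_inv_add_sub_inv_add ha hb) (tendsto_log_add_sub_log_add a b)]
  simp

end LogDifference

lemma mul_log_le_integral_Ioi_div_one_add_sub {N a : ℝ} (ha : 0 < a) {h : ℝ → ℝ}
    (hle : ∀ t > (0 : ℝ), h t ≤ N / (a + t))
    (hint : IntegrableOn (fun t => N / (1 + t) - h t) (Ioi 0)) :
    N * log a ≤ ∫ t in Ioi (0 : ℝ), (N / (1 + t) - h t) :=
  calc N * log a = ∫ t in Ioi (0 : ℝ), N * ((1 + t)⁻¹ - (a + t)⁻¹) := by
        rw [integral_const_mul, integral_Ioi_inv_add_sub_inv_add ha one_pos, log_one, sub_zero]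
    _ ≤ ∫ t in Ioi (0 : ℝ), (N / (1 + t) - h t) := by
        refine setIntegral_mono_on
          ((integrableOn_Ioi_inv_add_sub_inv_add ha one_pos).const_mul N) hint
          measurableSet_Ioi fun t ht => ?_
        have := hle t ht
        rw [mul_sub, ← div_eq_mul_inv, ← div_eq_mul_inv]
        linarith

theorem stmt13_general (n m : ℕ) (hnm : 0 < n + m) (lam : ℝ) (hlam : 0 < lam) (h : ℝ → ℝ)
    (hup : ∀ t > (0:ℝ), h t ≤ (n+m : ℝ) / ((n+m : ℝ)/lam + t))
    (hint : IntegrableOn (fun t => (n+m : ℝ)/(1+t) - h t) (Ioi 0)) :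
    (n+m : ℝ)/2 * Real.log (2 * π * (n+m) * Real.exp 1 / lam)
      ≤ (n+m : ℝ)/2 * Real.log (2 * π * Real.exp 1)
        + (1/2) * ∫ t in Ioi (0:ℝ), ((n+m : ℝ)/(1+t) - h t) := by
  have hN : (0 : ℝ) < n + m := by exact_mod_cast hnm
  have ha : 0 < (n + m : ℝ) / lam := div_pos hN hlam
  have hbound := mul_log_le_integral_Ioi_div_one_add_sub ha hup hint
  have hlog : log (2 * π * (n + m) * exp 1 / lam)
      = log (2 * π * exp 1) + log ((n + m) / lam) := by
    rw [← log_mul (by positivity) ha.ne']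
    ring_nf
  rw [hlog]
  linarith

/-- Lower bound for the non-microstate bi-free entropy from finite bi-free Fisher
information.  If `λ = Φ*(X⊔Y : (B_ℓ,B_r)) < ∞`, the bi-free Stam inequality
gives `h(t) = Φ*(X+√tS ⊔ Y+√tT) ≤ (n+m)/((n+m)/λ + t)` for all `t > 0`, and then
`χ*(X⊔Y : (B_ℓ,B_r)) = ((n+m)/2)log(2πe) + (1/2)∫₀^∞[(n+m)/(1+t) − h(t)]dt
  ≥ ((n+m)/2)·log(2π(n+m)e/λ) > −∞`. -/
theorem stmt13 (n m : ℕ) (hnm : 0 < n + m) (lam : ℝ) (hlam : 0 < lam) (h : ℝ → ℝ)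
    (hnn : ∀ t > (0:ℝ), 0 ≤ h t)
    (hup : ∀ t > (0:ℝ), h t ≤ (n+m : ℝ) / ((n+m : ℝ)/lam + t))
    (hint : IntegrableOn (fun t => (n+m : ℝ)/(1+t) - h t) (Ioi 0)) :
    (n+m : ℝ)/2 * Real.log (2 * π * (n+m) * Real.exp 1 / lam)
      ≤ (n+m : ℝ)/2 * Real.log (2 * π * Real.exp 1)
        + (1/2) * ∫ t in Ioi (0:ℝ), ((n+m : ℝ)/(1+t) - h t) :=
  stmt13_general n m hnm lam hlam h hup hint
end

section
/- (Entropy dimension of a bi-free central limit family.) Let A ∈ M_{n+m}(ℝ) be symmetric positive semidefinite with all diagonal entries equal to 1. Then (n+m) + limsup_{ε→0⁺} [((n+m)/2)log(2πe) + (1/2)log det(εI + A)] / |log √ε| = rank(A). Consequently, a self-adjoint bi-free central limit family with covariance matrix A has non-microstate bi-free entropy dimension δ* = rank(A). -/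
/-!
The eigenvalues `λᵢ ≥ 0` of `A` give `det (ε • 1 + A) = ∏ᵢ (ε + λᵢ) = ε ^ k * p ε`, where `k` is the
number of zero eigenvalues and `p ε = ∏_{λᵢ ≠ 0} (ε + λᵢ)` satisfies `p 0 > 0`. Since
`|log √ε| = -(log ε) / 2`, the quotient is `(2C + log (p ε)) / (-log ε) - k → -k` as `ε → 0⁺`,
and `(n + m) - k = rank A`.
-/

open Filter Real Set Matrix Topology
open scoped Finset

namespace Matrix.IsHermitian

variable {𝕜 ι : Type*} [RCLike 𝕜] [Fintype ι] [DecidableEq ι] {A : Matrix ι ι 𝕜}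

lemma det_smul_one_add (hA : A.IsHermitian) (t : 𝕜) :
    (t • (1 : Matrix ι ι 𝕜) + A).det = ∏ i, (t + hA.eigenvalues i) := by
  have h := congrArg (Polynomial.eval (-t)) hA.charpoly_eq
  rw [eval_charpoly, Polynomial.eval_prod] at h
  have hneg : scalar ι (-t) - A = -(t • (1 : Matrix ι ι 𝕜) + A) := by
    rw [scalar_apply, ← smul_one_eq_diagonal, neg_add, neg_smul, sub_eq_add_neg]
  rw [hneg, det_neg] at h
  simp only [Polynomial.eval_sub, Polynomial.eval_X, Polynomial.eval_C] at h
  have hprod : ∏ i, (-t - (hA.eigenvalues i : 𝕜))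
      = (-1) ^ Fintype.card ι * ∏ i, (t + hA.eigenvalues i) := by
    rw [← Finset.card_univ, ← Finset.prod_const, ← Finset.prod_mul_distrib]
    exact Finset.prod_congr rfl fun i _ => by ring
  rw [hprod] at h
  exact mul_left_cancel₀ (pow_ne_zero _ (neg_ne_zero.mpr one_ne_zero)) h

lemma rank_add_card_eigenvalues_eq_zero (hA : A.IsHermitian) :
    A.rank + #{i | hA.eigenvalues i = 0} = Fintype.card ι := by
  rw [hA.rank_eq_card_non_zero_eigs, Fintype.card_subtype, add_comm,
    Finset.card_filter_add_card_filter_not, Finset.card_univ]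

end Matrix.IsHermitian

lemma Finset.prod_add_eq_pow_mul_prod_filter_ne_zero {ι R : Type*} [CommSemiring R]
    [DecidableEq R] (s : Finset ι) (f : ι → R) (t : R) :
    ∏ i ∈ s, (t + f i) = t ^ #{i ∈ s | f i = 0} * ∏ i ∈ s with f i ≠ 0, (t + f i) := by
  rw [← prod_filter_mul_prod_filter_not s (fun i => f i = 0), ← prod_const]
  congr 1
  exact prod_congr rfl fun i hi => by rw [(mem_filter.mp hi).2, add_zero]

lemma tendsto_log_pow_mul_div_abs_log_sqrt (C : ℝ) (k : ℕ) {p : ℝ → ℝ} (hp : ContinuousAt p 0)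
    (hp0 : 0 < p 0) :
    Tendsto (fun ε => (C + 1 / 2 * log (ε ^ k * p ε)) / |log √ε|) (𝓝[>] 0) (𝓝 (-k)) := by
  have hnum : Tendsto (fun ε => 2 * C + log (p ε)) (𝓝[>] 0) (𝓝 (2 * C + log (p 0))) :=
    (tendsto_const_nhds.add ((continuousAt_log hp0.ne').tendsto.comp hp)).mono_left
      nhdsWithin_le_nhds
  have hden : Tendsto (fun ε => -log ε) (𝓝[>] 0) atTop :=
    tendsto_neg_atBot_atTop.comp tendsto_log_nhdsGT_zero
  have hlim := (hnum.div_atTop hden).sub_const (k : ℝ)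
  rw [zero_sub] at hlim
  refine hlim.congr' ?_
  have hp_pos : ∀ᶠ ε in 𝓝[>] (0 : ℝ), 0 < p ε :=
    nhdsWithin_le_nhds (hp.eventually (lt_mem_nhds hp0))
  filter_upwards [hp_pos, Ioo_mem_nhdsGT (zero_lt_one' ℝ)] with ε hpε ⟨hε0, hε1⟩
  have hlog : log ε < 0 := log_neg hε0 hε1
  have hlog_ne : log ε ≠ 0 := hlog.ne
  rw [log_sqrt hε0.le, abs_of_neg (by linarith), log_mul (by positivity) hpε.ne', log_pow]
  field_simp
  ring

theorem stmt14_general (n m : ℕ) (A : Matrix (Fin (n+m)) (Fin (n+m)) ℝ)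
    (hA : A.PosSemidef) :
    (n + m : ℝ) +
      Filter.limsup
        (fun ε : ℝ =>
          ((n+m : ℝ)/2 * Real.log (2 * π * Real.exp 1)
            + (1/2) * Real.log ((ε • (1 : Matrix (Fin (n+m)) (Fin (n+m)) ℝ) + A).det))
          / |Real.log (Real.sqrt ε)|)
        (nhdsWithin 0 (Ioi 0))
      = (A.rank : ℝ) := by
  set μ := hA.isHermitian.eigenvalues
  set p : ℝ → ℝ := fun ε => ∏ i with μ i ≠ 0, (ε + μ i)
  have hdet (ε : ℝ) : (ε • (1 : Matrix (Fin (n+m)) (Fin (n+m)) ℝ) + A).det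
      = ε ^ #{i | μ i = 0} * p ε := by
    rw [hA.isHermitian.det_smul_one_add, Finset.prod_add_eq_pow_mul_prod_filter_ne_zero]
    rfl
  have hp : ContinuousAt p 0 := by fun_prop
  have hp0 : 0 < p 0 := Finset.prod_pos fun i hi => by
    rw [zero_add]
    exact (hA.eigenvalues_nonneg i).lt_of_ne' (Finset.mem_filter.mp hi).2
  simp_rw [hdet]
  rw [(tendsto_log_pow_mul_div_abs_log_sqrt _ _ hp hp0).limsup_eq]
  have hrank : (A.rank : ℝ) + #{i | μ i = 0} = n + m := by
    exact_mod_cast hA.isHermitian.rank_add_card_eigenvalues_eq_zero.trans (Fintype.card_fin _)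
  linarith

/-- Entropy dimension of a bi-free central limit family.  For a symmetric
positive semidefinite `A ∈ M_{n+m}(ℝ)` with unit diagonal,
`(n+m) + limsup_{ε→0⁺} [((n+m)/2)log(2πe) + (1/2)log det(εI+A)]/|log √ε|
  = rank(A)`.
Consequently a self-adjoint bi-free central limit family with covariance matrix
`A` (whose `√ε`-semicircular perturbation has entropy
`((n+m)/2)log(2πe) + (1/2)log det(εI+A)`) has non-microstate bi-free entropy
dimension `δ* = rank(A)`. -/
theorem stmt14 (n m : ℕ) (A : Matrix (Fin (n+m)) (Fin (n+m)) ℝ)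
    (hsymm : A.IsSymm) (hA : A.PosSemidef) (hdiag : ∀ i, A i i = 1) :
    (n + m : ℝ) +
      Filter.limsup
        (fun ε : ℝ =>
          ((n+m : ℝ)/2 * Real.log (2 * π * Real.exp 1)
            + (1/2) * Real.log ((ε • (1 : Matrix (Fin (n+m)) (Fin (n+m)) ℝ) + A).det))
          / |Real.log (Real.sqrt ε)|)
        (nhdsWithin 0 (Ioi 0))
      = (A.rank : ℝ) :=
  stmt14_general n m A hA
end

section
/- (Lower bound for entropy dimension.) Let h : (0,∞) → [0,∞] be decreasing and suppose g : (0,∞) → ℝ ∪ {−∞} satisfies g(ε₀) − g(ε) = (1/2)∫_ε^{ε₀} h(t)dt for 0 < ε < ε₀, with g(ε₀) finite. If limsup_{ε→0⁺} ε·h(ε) =: L < ∞, then liminf_{ε→0⁺} g(ε)/|log√ε| ≥ −L. Consequently δ*(X⊔Y) ≥ (n+m) − limsup_{ε→0⁺} ε·Φ*(X+√εS ⊔ Y+√εT), with equality if the limit lim_{ε→0⁺} ε·Φ*(X+√εS ⊔ Y+√εT) exists. -/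
open MeasureTheory Filter Set Real

private lemma tendsto_aux15 (A k : ℝ) :
    Tendsto (fun ε => (A + k * Real.log ε) / |Real.log (Real.sqrt ε)|)
      (nhdsWithin (0:ℝ) (Ioi 0)) (nhds (-(2*k))) := by
  have hneg : Tendsto (fun ε : ℝ => -Real.log ε) (nhdsWithin (0:ℝ) (Ioi 0)) atTop :=
    tendsto_neg_atBot_atTop.comp Real.tendsto_log_nhdsGT_zero
  have h1 : Tendsto (fun ε : ℝ => (2*A) / (-Real.log ε)) (nhdsWithin (0:ℝ) (Ioi 0)) (nhds 0) :=
    Tendsto.div_atTop tendsto_const_nhds hneg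
  have h2 : Tendsto (fun ε : ℝ => (2*A) / (-Real.log ε) - 2*k)
      (nhdsWithin (0:ℝ) (Ioi 0)) (nhds (0 - 2*k)) := h1.sub_const _
  rw [show (0:ℝ) - 2*k = -(2*k) by ring] at h2
  refine h2.congr' ?_
  filter_upwards [Ioo_mem_nhdsGT_of_mem (show (0:ℝ) ∈ Ico (0:ℝ) 1 by simp)] with ε hε
  have hlog : Real.log ε < 0 := Real.log_neg hε.1 hε.2
  have hne : Real.log ε ≠ 0 := ne_of_lt hlog
  rw [Real.log_sqrt hε.1.le, abs_of_neg (by linarith : Real.log ε / 2 < 0)]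
  have hne' : -Real.log ε ≠ 0 := neg_ne_zero.2 hne
  have hne2 : -(Real.log ε / 2) ≠ 0 := by simpa using (by positivity : -(Real.log ε) / 2 ≠ 0)
  rw [show (A + k * Real.log ε) / -(Real.log ε / 2)
      = ((A + k * Real.log ε) * 2) / (-Real.log ε) by
    rw [div_eq_div_iff hne2 hne']; ring]
  rw [eq_div_iff hne', sub_mul, div_mul_cancel₀ _ hne']
  ring

private lemma int_upper15 (h : ℝ → ℝ) (a b c : ℝ) (ha : 0 < a) (hab : a ≤ b)
    (hint : IntervalIntegrable h volume a b)
    (hle : ∀ t ∈ Icc a b, h t ≤ c / t) :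
    ∫ t in a..b, h t ≤ c * (Real.log b - Real.log a) := by
  have hb : 0 < b := lt_of_lt_of_le ha hab
  have h2 : IntervalIntegrable (fun t : ℝ => c / t) volume a b := by
    apply ContinuousOn.intervalIntegrable
    rw [Set.uIcc_of_le hab]
    exact continuousOn_const.div continuousOn_id (fun x hx => ne_of_gt (lt_of_lt_of_le ha hx.1))
  calc ∫ t in a..b, h t ≤ ∫ t in a..b, c / t :=
        intervalIntegral.integral_mono_on hab hint h2 hle
    _ = c * (Real.log b - Real.log a) := by
        simp_rw [div_eq_mul_inv, ← one_div]
        rw [intervalIntegral.integral_const_mul, integral_one_div_of_pos ha hb,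
          Real.log_div (ne_of_gt hb) (ne_of_gt ha)]

private lemma int_lower15 (h : ℝ → ℝ) (a b c : ℝ) (ha : 0 < a) (hab : a ≤ b)
    (hint : IntervalIntegrable h volume a b)
    (hle : ∀ t ∈ Icc a b, c / t ≤ h t) :
    c * (Real.log b - Real.log a) ≤ ∫ t in a..b, h t := by
  have hb : 0 < b := lt_of_lt_of_le ha hab
  have h2 : IntervalIntegrable (fun t : ℝ => c / t) volume a b := by
    apply ContinuousOn.intervalIntegrable
    rw [Set.uIcc_of_le hab]
    exact continuousOn_const.div continuousOn_id (fun x hx => ne_of_gt (lt_of_lt_of_le ha hx.1))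
  calc c * (Real.log b - Real.log a) = ∫ t in a..b, c / t := by
        simp_rw [div_eq_mul_inv, ← one_div]
        rw [intervalIntegral.integral_const_mul, integral_one_div_of_pos ha hb,
          Real.log_div (ne_of_gt hb) (ne_of_gt ha)]
    _ ≤ ∫ t in a..b, h t := intervalIntegral.integral_mono_on hab h2 hint hle

/-- Lower bound for the non-microstate bi-free entropy dimension.  Let
`h(ε) = Φ*(X+√εS ⊔ Y+√εT)` (decreasing, nonnegative) and let
`g(ε) = χ*(X+√εS ⊔ Y+√εT)` satisfy `g(ε₀) − g(ε) = (1/2)∫_ε^{ε₀} h(t)dt`.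
If `limsup_{ε→0⁺} ε·h(ε) = L < ∞` then
`liminf_{ε→0⁺} g(ε)/|log √ε| ≥ −L`; consequently
`δ*(X⊔Y) = (n+m) + limsup_{ε→0⁺} g(ε)/|log √ε| ≥ (n+m) − L`,
with equality whenever `lim_{ε→0⁺} ε·h(ε)` exists. -/
theorem stmt15 (n m : ℕ) (h g : ℝ → ℝ) (ε₀ : ℝ) (hε₀ : 0 < ε₀) (L : ℝ)
    (hmono : AntitoneOn h (Ioi 0))
    (hnn : ∀ t > (0:ℝ), 0 ≤ h t)
    (hg : ∀ ε : ℝ, 0 < ε → ε < ε₀ → g ε₀ - g ε = (1/2) * ∫ t in ε..ε₀, h t)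
    (hbdd : IsBoundedUnder (· ≤ ·) (nhdsWithin 0 (Ioi 0)) (fun ε => ε * h ε))
    (hL : Filter.limsup (fun ε => ε * h ε) (nhdsWithin 0 (Ioi 0)) = L) :
    (-L) ≤ Filter.liminf (fun ε => g ε / |Real.log (Real.sqrt ε)|) (nhdsWithin 0 (Ioi 0)) ∧
    ((n + m : ℝ) - L ≤ (n + m : ℝ) +
      Filter.limsup (fun ε => g ε / |Real.log (Real.sqrt ε)|) (nhdsWithin 0 (Ioi 0))) ∧
    (Filter.Tendsto (fun ε => ε * h ε) (nhdsWithin 0 (Ioi 0)) (nhds L) →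
      (n + m : ℝ) +
        Filter.limsup (fun ε => g ε / |Real.log (Real.sqrt ε)|) (nhdsWithin 0 (Ioi 0))
        = (n + m : ℝ) - L) := by
  -- integrability of h on positive intervals
  have hInt : ∀ a b : ℝ, 0 < a → a ≤ b → IntervalIntegrable h volume a b := by
    intro a b ha hab
    apply AntitoneOn.intervalIntegrable
    apply hmono.mono
    rw [Set.uIcc_of_le hab]
    intro x hx; exact lt_of_lt_of_le ha hx.1
  -- L is nonnegative
  have hL0 : 0 ≤ L := by
    rw [← hL]
    apply Filter.le_limsup_of_frequently_le _ hbdd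
    apply Filter.Eventually.frequently
    filter_upwards [self_mem_nhdsWithin] with ε hε
    exact mul_nonneg (le_of_lt hε) (hnn ε hε)
  -- eventual positivity of the denominator
  have hden : ∀ᶠ ε in nhdsWithin (0:ℝ) (Ioi 0), 0 < |Real.log (Real.sqrt ε)| := by
    filter_upwards [Ioo_mem_nhdsGT_of_mem (show (0:ℝ) ∈ Ico (0:ℝ) 1 by simp)] with ε hε
    have hlog : Real.log ε < 0 := Real.log_neg hε.1 hε.2
    rw [Real.log_sqrt hε.1.le]
    exact abs_pos.2 (by linarith)
  -- key lower eventual bound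
  have hlow : ∀ δ : ℝ, 0 < δ → ∀ᶠ ε in nhdsWithin (0:ℝ) (Ioi 0),
      -L - 2*δ ≤ g ε / |Real.log (Real.sqrt ε)| := by
    intro δ hδ
    have hev1 : ∀ᶠ ε in nhdsWithin (0:ℝ) (Ioi 0), ε * h ε < L + δ := by
      apply Filter.eventually_lt_of_limsup_lt _ hbdd
      rw [hL]; linarith
    obtain ⟨ε₁, hε₁, hsub⟩ := mem_nhdsGT_iff_exists_Ioo_subset.1 hev1
    rw [Set.mem_Ioi] at hε₁
    set b : ℝ := min ε₁ ε₀ / 2 with hbdef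
    have hmin0 : 0 < min ε₁ ε₀ := lt_min hε₁ hε₀
    have hb0 : 0 < b := by positivity
    have hbε₁ : b < ε₁ := lt_of_lt_of_le (half_lt_self hmin0) (min_le_left _ _)
    have hbε₀ : b < ε₀ := lt_of_lt_of_le (half_lt_self hmin0) (min_le_right _ _)
    -- bound on h below b
    have hhb : ∀ t : ℝ, 0 < t → t ≤ b → h t ≤ (L + δ) / t := by
      intro t ht htb
      have : t * h t < L + δ := hsub ⟨ht, lt_of_le_of_lt htb hbε₁⟩
      rw [le_div_iff₀ ht]
      linarith [mul_comm t (h t)]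
    set C : ℝ := (1/2) * ∫ t in b..ε₀, h t with hC
    set k : ℝ := (L + δ) / 2 with hk
    set A : ℝ := g ε₀ - C - k * Real.log b with hA
    have key : ∀ ε : ℝ, 0 < ε → ε < b → A + k * Real.log ε ≤ g ε := by
      intro ε hε hεb
      have hsplit : ∫ t in ε..ε₀, h t = (∫ t in ε..b, h t) + ∫ t in b..ε₀, h t :=
        (intervalIntegral.integral_add_adjacent_intervals (hInt ε b hε hεb.le)
          (hInt b ε₀ hb0 hbε₀.le)).symm
      have hub : ∫ t in ε..b, h t ≤ (L + δ) * (Real.log b - Real.log ε) :=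
        int_upper15 h ε b (L + δ) hε hεb.le (hInt ε b hε hεb.le)
          (fun t ht => hhb t (lt_of_lt_of_le hε ht.1) ht.2)
      have hgε := hg ε hε (lt_trans hεb hbε₀)
      rw [hsplit] at hgε
      have hk2 : (1/2) * ((L + δ) * (Real.log b - Real.log ε))
          = k * Real.log b - k * Real.log ε := by rw [hk]; ring
      rw [hA, hC]
      nlinarith [hub, hgε]
    have hq : ∀ᶠ ε in nhdsWithin (0:ℝ) (Ioi 0),
        -(2*k) - δ ≤ (A + k * Real.log ε) / |Real.log (Real.sqrt ε)| :=
      (tendsto_aux15 A k).eventually (eventually_ge_nhds (by linarith))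
    have hsmall : ∀ᶠ ε in nhdsWithin (0:ℝ) (Ioi 0), ε ∈ Ioo (0:ℝ) b :=
      Filter.eventually_of_mem (Ioo_mem_nhdsGT_of_mem ⟨le_refl _, hb0⟩) (fun x hx => hx)
    filter_upwards [hq, hsmall, hden] with ε h1 h2 h3
    have hkey := key ε h2.1 h2.2
    have : (A + k * Real.log ε) / |Real.log (Real.sqrt ε)| ≤ g ε / |Real.log (Real.sqrt ε)| :=
      (div_le_div_iff_of_pos_right h3).2 hkey
    have hkk : -(2*k) - δ = -L - 2*δ := by rw [hk]; ring
    linarith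
  -- names for the liminf/limsup sets
  set u : ℝ → ℝ := fun ε => g ε / |Real.log (Real.sqrt ε)| with hu
  -- every eventual upper bound of u is ≥ -L
  have helem : ∀ a : ℝ, (∀ᶠ ε in nhdsWithin (0:ℝ) (Ioi 0), u ε ≤ a) → -L ≤ a := by
    intro a ha
    refine le_of_forall_pos_le_add (fun δ hδ => ?_)
    obtain ⟨ε, hε1, hε2⟩ := ((hlow (δ/2) (by positivity)).and ha).exists
    simp only [hu] at hε2
    linarith [hε1, hε2]
  refine ⟨?_, ?_, ?_⟩
  · -- liminf bound
    rw [Filter.liminf_eq]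
    by_cases hba : BddAbove {a | ∀ᶠ ε in nhdsWithin (0:ℝ) (Ioi 0), a ≤ u ε}
    · refine le_of_forall_pos_le_add (fun δ hδ => ?_)
      have hmem : -L - 2*(δ/2) ∈ {a | ∀ᶠ ε in nhdsWithin (0:ℝ) (Ioi 0), a ≤ u ε} :=
        hlow (δ/2) (by positivity)
      have := le_csSup hba hmem
      linarith
    · rw [Real.sSup_of_not_bddAbove hba]
      linarith
  · -- limsup bound
    rw [Filter.limsup_eq]
    by_cases hne : {a | ∀ᶠ ε in nhdsWithin (0:ℝ) (Ioi 0), u ε ≤ a}.Nonempty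
    · have := le_csInf hne (fun a ha => helem a ha)
      linarith
    · rw [Set.not_nonempty_iff_eq_empty] at hne
      rw [hne, Real.sInf_empty]
      linarith
  · -- equality case
    intro htend
    -- eventual upper bound on u
    have hupp : ∀ δ : ℝ, 0 < δ → ∀ᶠ ε in nhdsWithin (0:ℝ) (Ioi 0), u ε ≤ -L + 2*δ := by
      intro δ hδ
      have hev1 : ∀ᶠ ε in nhdsWithin (0:ℝ) (Ioi 0), L - δ < ε * h ε :=
        htend.eventually (eventually_gt_nhds (by linarith))
      obtain ⟨ε₁, hε₁, hsub⟩ := mem_nhdsGT_iff_exists_Ioo_subset.1 hev1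
      rw [Set.mem_Ioi] at hε₁
      set b : ℝ := min ε₁ ε₀ / 2 with hbdef
      have hmin0 : 0 < min ε₁ ε₀ := lt_min hε₁ hε₀
      have hb0 : 0 < b := by positivity
      have hbε₁ : b < ε₁ := lt_of_lt_of_le (half_lt_self hmin0) (min_le_left _ _)
      have hbε₀ : b < ε₀ := lt_of_lt_of_le (half_lt_self hmin0) (min_le_right _ _)
      have hhb : ∀ t : ℝ, 0 < t → t ≤ b → (L - δ) / t ≤ h t := by
        intro t ht htb
        have : L - δ < t * h t := hsub ⟨ht, lt_of_le_of_lt htb hbε₁⟩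
        rw [div_le_iff₀ ht]
        linarith [mul_comm t (h t)]
      set k : ℝ := (L - δ) / 2 with hk
      set B : ℝ := g ε₀ - k * Real.log b with hB
      have key : ∀ ε : ℝ, 0 < ε → ε < b → g ε ≤ B + k * Real.log ε := by
        intro ε hε hεb
        have hsplit : ∫ t in ε..ε₀, h t = (∫ t in ε..b, h t) + ∫ t in b..ε₀, h t :=
          (intervalIntegral.integral_add_adjacent_intervals (hInt ε b hε hεb.le)
            (hInt b ε₀ hb0 hbε₀.le)).symm
        have hlb : (L - δ) * (Real.log b - Real.log ε) ≤ ∫ t in ε..b, h t :=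
          int_lower15 h ε b (L - δ) hε hεb.le (hInt ε b hε hεb.le)
            (fun t ht => hhb t (lt_of_lt_of_le hε ht.1) ht.2)
        have hpos : 0 ≤ ∫ t in b..ε₀, h t :=
          intervalIntegral.integral_nonneg hbε₀.le
            (fun t ht => hnn t (lt_of_lt_of_le hb0 ht.1))
        have hgε := hg ε hε (lt_trans hεb hbε₀)
        rw [hsplit] at hgε
        rw [hB, hk]
        nlinarith [hlb, hpos, hgε]
      have hq : ∀ᶠ ε in nhdsWithin (0:ℝ) (Ioi 0),
          (B + k * Real.log ε) / |Real.log (Real.sqrt ε)| ≤ -(2*k) + δ :=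
        (tendsto_aux15 B k).eventually (eventually_le_nhds (by linarith))
      have hsmall : ∀ᶠ ε in nhdsWithin (0:ℝ) (Ioi 0), ε ∈ Ioo (0:ℝ) b :=
        Filter.eventually_of_mem (Ioo_mem_nhdsGT_of_mem ⟨le_refl _, hb0⟩) (fun x hx => hx)
      filter_upwards [hq, hsmall, hden] with ε h1 h2 h3
      have hkey := key ε h2.1 h2.2
      have hdivle : g ε / |Real.log (Real.sqrt ε)| ≤ (B + k * Real.log ε) / |Real.log (Real.sqrt ε)| :=
        (div_le_div_iff_of_pos_right h3).2 hkey
      have hkk : -(2*k) + δ = -L + 2*δ := by rw [hk]; ring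
      simp only [hu]
      linarith
    rw [Filter.limsup_eq]
    set t : Set ℝ := {a | ∀ᶠ ε in nhdsWithin (0:ℝ) (Ioi 0), u ε ≤ a} with ht
    have hne : t.Nonempty := ⟨-L + 2*1, hupp 1 one_pos⟩
    have hbb : BddBelow t := ⟨-L, fun a ha => helem a ha⟩
    have h1 : sInf t ≤ -L := by
      refine le_of_forall_pos_le_add (fun δ hδ => ?_)
      have := csInf_le hbb (hupp (δ/2) (by positivity) : (-L + 2*(δ/2)) ∈ t)
      linarith
    have h2 : -L ≤ sInf t := le_csInf hne (fun a ha => helem a ha)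
    have : sInf t = -L := le_antisymm h1 h2
    rw [this]
    ring
end
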